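/- arXiv:2604.18571 — 6 statements merged into one kernel-verified Lean document; each statement's English description precedes it below -/
import Mathlib

section
/- Let d ≥ 1, s ∈ (0,1), p ∈ (1,∞), R₀ ∈ (0,1), and let u : ℝ^d → ℝ be β-Hölder continuous on the closed ball of radius R₀ about 0, for some β ∈ (0,1]. If for every i ∈ {1,…,d} the series Σ_{k=1}^∞ m_{i,k}^{−1/(2k)} diverges to +∞, then u vanishes to infinite order at the origin, i.e. for every n ∈ ℕ there exists C > 0 such that |u(x)| ≤ C|x|^n for all x in a neighborhood of 0. -/
open MeasureTheory Filter Asymptotics Metric Set NNReal ENNReal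

noncomputable section

/-- Euclidean space `ℝ^d`. -/
abbrev Ed (d : ℕ) := EuclideanSpace ℝ (Fin d)

/-- `J_p(t) = |t|^{p-2} t`. -/
def Jp (p t : ℝ) : ℝ := |t| ^ (p - 2) * t

/-- The principal value defining the fractional `p`-Laplacian of `u` at `x` exists and
equals `L`. -/
def fracPLapAt (d : ℕ) (s p : ℝ) (u : Ed d → ℝ) (x : Ed d) (L : ℝ) : Prop :=
  Tendsto (fun δ : ℝ =>
      ∫ y in {y : Ed d | δ < ‖x - y‖}, Jp p (u x - u y) / ‖x - y‖ ^ ((d : ℝ) + s * p))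
    (nhdsWithin 0 (Ioi 0)) (nhds L)

/-- Membership in the tail space `L^{p-1}_{sp}(ℝ^d)`. -/
def memTail (d : ℕ) (s p : ℝ) (u : Ed d → ℝ) : Prop :=
  Measurable u ∧
    Integrable (fun x : Ed d => |u x| ^ (p - 1) / (1 + ‖x‖) ^ ((d : ℝ) + s * p))

/-- The moments `m_{i,k} = ∫ x_i^{2k} |x|^{-4k} |u(x)|^{p-1} |x|^{-d-sp} dx ∈ [0,∞]`. -/
def mik (d : ℕ) (s p : ℝ) (u : Ed d → ℝ) (i : Fin d) (k : ℕ) : ℝ≥0∞ :=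
  ∫⁻ x : Ed d, ENNReal.ofReal
    ((x i ^ (2 * k) / ‖x‖ ^ (4 * k)) * (|u x| ^ (p - 1) / ‖x‖ ^ ((d : ℝ) + s * p)))

/-- The Carleman-type condition: for every `i` the series `∑_{k≥1} m_{i,k}^{-1/(2k)}`
diverges to `+∞` (with conventions `1/0 = ∞`, `1/∞ = 0`). -/
def carleman (d : ℕ) (s p : ℝ) (u : Ed d → ℝ) : Prop :=
  ∀ i : Fin d, ∑' k : ℕ, (mik d s p u i (k + 1) ^ ((1 : ℝ) / (2 * ((k : ℝ) + 1))))⁻¹ = ⊤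

/-! If `u` is not `O(|x|^n)` at the origin, then, since the cones `{‖x‖ ≤ d |x_i|}` cover `ℝ^d`,
there are points `x → 0` inside one of them with `|u x| ≥ 2C |x|^n`. Hölder continuity keeps
`|u| ≥ |u x| / 2` on a ball of radius `≍ |x|^{n/β+1}` around `x`, on which the weight
`x_i^{2k} |x|^{-4k}` is `≍ |x|^{-2k}`. Hence `m_{i,k} ≳ |x|^{E - 2k}` with
`E = n(p-1) + (n/β+1)d`: every `m_{i,k}` is positive and `m_{i,k} = ∞` once `2k > E`, so the
Carleman series for that `i` has only finitely many nonzero terms, all finite. -/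

open Topology

theorem ENNReal.tsum_inv_rpow_ne_top {f : ℕ → ℝ≥0∞} {e : ℕ → ℝ} (he : ∀ k, 0 < e k)
    (hf0 : ∀ k, f k ≠ 0) (hftop : ∀ᶠ k in atTop, f k = ⊤) : ∑' k, (f k ^ e k)⁻¹ ≠ ⊤ := by
  obtain ⟨K, hK⟩ := eventually_atTop.1 hftop
  rw [tsum_eq_sum (s := Finset.range K) fun k hk => ?_]
  · exact ENNReal.sum_ne_top.2 fun k _ => by simp [hf0 k, (he k).le]
  · rw [hK k (by simpa using hk), ENNReal.top_rpow_of_pos (he k), ENNReal.inv_top]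

theorem ENNReal.ofReal_mul_measure_le_lintegral {α : Type*} [MeasurableSpace α] {μ : Measure α}
    {f : α → ℝ} {c : ℝ} {B : Set α} (hB : MeasurableSet B) (hf : ∀ x ∈ B, c ≤ f x) :
    ENNReal.ofReal c * μ B ≤ ∫⁻ x, ENNReal.ofReal (f x) ∂μ := by
  calc ENNReal.ofReal c * μ B = ∫⁻ _ in B, ENNReal.ofReal c ∂μ := (setLIntegral_const B _).symm
    _ ≤ ∫⁻ x in B, ENNReal.ofReal (f x) ∂μ :=
        setLIntegral_mono' hB fun x hx => ENNReal.ofReal_le_ofReal (hf x hx)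
    _ ≤ _ := setLIntegral_le_lintegral B _

theorem HolderOnWith.abs_div_two_le {X : Type*} [PseudoMetricSpace X] {C r : ℝ≥0} {f : X → ℝ}
    {S : Set X} (hf : HolderOnWith C r f S) (hC : 0 < C) (hr : 0 < r) {x y : X} (hx : x ∈ S)
    (hy : y ∈ S) (hxy : dist x y ≤ (|f x| / (2 * C)) ^ (r⁻¹ : ℝ)) : |f x| / 2 ≤ |f y| := by
  have hpow : dist x y ^ (r : ℝ) ≤ |f x| / (2 * C) := by
    calc dist x y ^ (r : ℝ) ≤ ((|f x| / (2 * C)) ^ (r⁻¹ : ℝ)) ^ (r : ℝ) := by gcongr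
      _ = |f x| / (2 * C) := by
        rw [← Real.rpow_mul (by positivity), inv_mul_cancel₀ (by positivity), Real.rpow_one]
  have hdist : |f x - f y| ≤ |f x| / 2 := by
    calc |f x - f y| ≤ C * dist x y ^ (r : ℝ) := hf.dist_le hx hy
      _ ≤ C * (|f x| / (2 * C)) := by gcongr
      _ = |f x| / 2 := by field_simp
  linarith [abs_sub_abs_le_abs_sub (f x) (f y)]

theorem EuclideanSpace.exists_norm_le_card_mul_abs_apply {ι : Type*} [Fintype ι] [Nonempty ι]
    (x : EuclideanSpace ℝ ι) : ∃ i, ‖x‖ ≤ Fintype.card ι * |x i| := by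
  obtain ⟨i, -, hi⟩ := Finset.exists_max_image Finset.univ (fun j => |x j|) Finset.univ_nonempty
  refine ⟨i, (pow_le_pow_iff_left₀ (norm_nonneg x) (by positivity) two_ne_zero).1 ?_⟩
  have hcard : (1 : ℝ) ≤ Fintype.card ι := by exact_mod_cast Fintype.card_pos
  calc ‖x‖ ^ 2 = ∑ j, |x j| ^ 2 := by simp [EuclideanSpace.real_norm_sq_eq]
    _ ≤ ∑ _j : ι, |x i| ^ 2 := Finset.sum_le_sum fun j _ =>
        pow_le_pow_left₀ (abs_nonneg _) (hi j (Finset.mem_univ j)) 2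
    _ = Fintype.card ι * |x i| ^ 2 := by simp
    _ ≤ (Fintype.card ι * |x i|) ^ 2 := by rw [mul_pow]; gcongr; nlinarith

theorem EuclideanSpace.inv_le_sq_apply_div_norm_pow_four {ι : Type*} [Fintype ι]
    {x y : EuclideanSpace ℝ ι} {i : ι} {c : ℝ} (hc : 1 ≤ c) (hx : ‖x‖ ≤ c * |x i|)
    (hy : dist y x ≤ ‖x‖ / (2 * c)) : (64 * c ^ 2 * ‖x‖ ^ 2)⁻¹ ≤ y i ^ 2 / ‖y‖ ^ 4 := by
  rcases (norm_nonneg x).eq_or_lt with hx0 | hx0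
  · rw [← hx0, zero_pow two_ne_zero, mul_zero, _root_.inv_zero]; positivity
  have hyx : ‖y - x‖ ≤ ‖x‖ / (2 * c) := by rwa [← dist_eq_norm]
  have hyi : ‖x‖ / (2 * c) ≤ |y i| := by
    have h1 : |y i - x i| ≤ ‖y - x‖ := by simpa using PiLp.norm_apply_le (y - x) i
    have h2 : ‖x‖ / c ≤ |x i| := by rwa [div_le_iff₀ (by positivity), mul_comm]
    have h3 : ‖x‖ / (2 * c) = ‖x‖ / c - ‖x‖ / (2 * c) := by field_simp; ring
    linarith [abs_sub_abs_le_abs_sub (x i) (y i), abs_sub_comm (y i) (x i)]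
  have hy2 : ‖y‖ ≤ 2 * ‖x‖ := by
    have : ‖x‖ / (2 * c) ≤ ‖x‖ := div_le_self hx0.le (by linarith)
    linarith [norm_le_norm_add_norm_sub' y x]
  have hy0 : 0 < ‖y‖ := by
    have : 0 < ‖x‖ / (2 * c) := by positivity
    linarith [PiLp.norm_apply_le y i, Real.norm_eq_abs (y i)]
  calc (64 * c ^ 2 * ‖x‖ ^ 2)⁻¹ = (‖x‖ / (2 * c)) ^ 2 / (2 * ‖x‖) ^ 4 := by field_simp; ring
    _ ≤ y i ^ 2 / ‖y‖ ^ 4 := by rw [← sq_abs (y i)]; gcongr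

section Moments

variable {d : ℕ} {s p : ℝ} {u : Ed d → ℝ} {i : Fin d} {C β : ℝ≥0} {R : ℝ} {x : Ed d} {n : ℕ}

theorem le_mik_integrand_of_dist_le (hs : 0 ≤ s) (hp : 1 ≤ p) (hC : 1 ≤ C) (hβ : 0 < β)
    (hu : HolderOnWith C β u (closedBall 0 R)) (hx0 : x ≠ 0) (hxR : 2 * ‖x‖ ≤ R)
    (hx1 : 2 * ‖x‖ ≤ 1) (hcone : ‖x‖ ≤ d * |x i|) (hux : 2 * C * ‖x‖ ^ n ≤ |u x|)
    {y : Ed d} (hy : dist y x ≤ ‖x‖ ^ (n / β + 1 : ℝ) / (2 * d)) (k : ℕ) :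
    (64 * d ^ 2 * ‖x‖ ^ 2)⁻¹ ^ k * (‖x‖ ^ n) ^ (p - 1) ≤
      (y i ^ (2 * k) / ‖y‖ ^ (4 * k)) * (|u y| ^ (p - 1) / ‖y‖ ^ ((d : ℝ) + s * p)) := by
  have hr0 : 0 < ‖x‖ := norm_pos_iff.2 hx0
  have hd : (1 : ℝ) ≤ d := by exact_mod_cast i.pos
  have hrpow : ‖x‖ ^ (n / β + 1 : ℝ) ≤ ‖x‖ :=
    Real.rpow_le_self_of_le_one hr0.le (by linarith) (le_add_of_nonneg_left (by positivity))
  have hyx : dist y x ≤ ‖x‖ / (2 * d) := hy.trans (by gcongr)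
  have hy2 : ‖y‖ ≤ 2 * ‖x‖ := by
    have : ‖x‖ / (2 * d) ≤ ‖x‖ := div_le_self hr0.le (by linarith)
    linarith [norm_le_norm_add_norm_sub' y x, dist_eq_norm y x]
  have hy0 : 0 < ‖y‖ := by
    have : ‖x‖ / (2 * d) ≤ ‖x‖ / 2 := by gcongr; linarith
    linarith [norm_sub_norm_le x y, dist_eq_norm x y, dist_comm x y]
  have hxB : x ∈ closedBall (0 : Ed d) R := by rw [mem_closedBall_zero_iff]; linarith
  have hyB : y ∈ closedBall (0 : Ed d) R := by rw [mem_closedBall_zero_iff]; linarith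
  have huy : ‖x‖ ^ n ≤ |u y| := by
    refine le_trans ?_ (hu.abs_div_two_le (by positivity) hβ hxB hyB ?_)
    · have : ‖x‖ ^ n ≤ C * ‖x‖ ^ n := le_mul_of_one_le_left (by positivity) (mod_cast hC)
      linarith
    calc dist x y ≤ ‖x‖ ^ (n / β + 1 : ℝ) := by
          rw [dist_comm]; exact hy.trans (div_le_self (by positivity) (by linarith))
      _ ≤ ‖x‖ ^ (n / β : ℝ) := Real.rpow_le_rpow_of_exponent_ge hr0 (by linarith) (by linarith)
      _ = (‖x‖ ^ n) ^ (β⁻¹ : ℝ) := by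
          rw [← Real.rpow_natCast, ← Real.rpow_mul hr0.le, div_eq_mul_inv]
      _ ≤ (|u x| / (2 * C)) ^ (β⁻¹ : ℝ) := by
          gcongr
          rw [le_div_iff₀ (by positivity)]; linarith
  have hweight : (64 * d ^ 2 * ‖x‖ ^ 2)⁻¹ ^ k ≤ y i ^ (2 * k) / ‖y‖ ^ (4 * k) := by
    rw [pow_mul, pow_mul, ← div_pow]
    gcongr
    exact EuclideanSpace.inv_le_sq_apply_div_norm_pow_four hd hcone hyx
  have hval : (‖x‖ ^ n) ^ (p - 1) ≤ |u y| ^ (p - 1) / ‖y‖ ^ ((d : ℝ) + s * p) := by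
    rw [le_div_iff₀ (by positivity)]
    calc (‖x‖ ^ n) ^ (p - 1) * ‖y‖ ^ ((d : ℝ) + s * p) ≤ (‖x‖ ^ n) ^ (p - 1) * 1 := by
          gcongr
          exact Real.rpow_le_one hy0.le (by linarith) (by positivity)
      _ ≤ |u y| ^ (p - 1) := by
          rw [mul_one]; exact Real.rpow_le_rpow (by positivity) huy (by linarith)
  have hweight0 : 0 ≤ (64 * d ^ 2 * ‖x‖ ^ 2 : ℝ)⁻¹ ^ k := by positivity
  exact mul_le_mul hweight hval (by positivity) (hweight0.trans hweight)

theorem ofReal_mul_rpow_le_mik (hs : 0 ≤ s) (hp : 1 ≤ p) (hC : 1 ≤ C) (hβ : 0 < β)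
    (hu : HolderOnWith C β u (closedBall 0 R)) (hx0 : x ≠ 0) (hxR : 2 * ‖x‖ ≤ R)
    (hx1 : 2 * ‖x‖ ≤ 1) (hcone : ‖x‖ ≤ d * |x i|) (hux : 2 * C * ‖x‖ ^ n ≤ |u x|) (k : ℕ) :
    ENNReal.ofReal ((64 * (d : ℝ) ^ 2)⁻¹ ^ k * (2 * (d : ℝ))⁻¹ ^ d *
        (volume (ball (0 : Ed d) 1)).toReal * ‖x‖ ^ (n * (p - 1) + (n / β + 1) * d - 2 * k : ℝ)) ≤
      mik d s p u i k := by
  have hr0 : 0 < ‖x‖ := norm_pos_iff.2 hx0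
  set ρ := ‖x‖ ^ (n / β + 1 : ℝ) / (2 * d)
  have hρ : 0 < ρ := by have := i.pos; positivity
  have hvol : volume (ball x ρ) =
      ENNReal.ofReal (ρ ^ d * (volume (ball (0 : Ed d) 1)).toReal) := by
    rw [Measure.addHaar_ball_of_pos _ _ hρ, finrank_euclideanSpace_fin,
      ENNReal.ofReal_mul (by positivity), ENNReal.ofReal_toReal measure_ball_lt_top.ne]
  calc _ = ENNReal.ofReal ((64 * d ^ 2 * ‖x‖ ^ 2)⁻¹ ^ k * (‖x‖ ^ n) ^ (p - 1)) *
        volume (ball x ρ) := by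
        rw [hvol, ← ENNReal.ofReal_mul (by positivity), Real.rpow_sub hr0, Real.rpow_add hr0,
          Real.rpow_mul hr0.le, Real.rpow_mul hr0.le, Real.rpow_natCast, Real.rpow_natCast,
          show (2 * k : ℝ) = ((2 * k : ℕ) : ℝ) by push_cast; ring, Real.rpow_natCast, pow_mul]
        congr 1
        simp only [ρ]
        ring
    _ ≤ mik d s p u i k := ENNReal.ofReal_mul_measure_le_lintegral measurableSet_ball fun y hy =>
        le_mik_integrand_of_dist_le hs hp hC hβ hu hx0 hxR hx1 hcone hux (mem_ball.1 hy).le k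

theorem mik_ne_zero_and_eq_top_of_frequently (hs : 0 ≤ s) (hp : 1 ≤ p) (hC : 1 ≤ C)
    (hβ : 0 < β) (hu : HolderOnWith C β u (closedBall 0 R)) (hR : 0 < R)
    (h : ∃ᶠ x in 𝓝[≠] (0 : Ed d), ‖x‖ ≤ d * |x i| ∧ 2 * C * ‖x‖ ^ n < |u x|) (k : ℕ) :
    mik d s p u i k ≠ 0 ∧ (n * (p - 1) + (n / β + 1) * d < 2 * k → mik d s p u i k = ⊤) := by
  set c : ℝ := (64 * (d : ℝ) ^ 2)⁻¹ ^ k * (2 * (d : ℝ))⁻¹ ^ d * (volume (ball (0 : Ed d) 1)).toReal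
  have hc : 0 < c := by
    have : 0 < (volume (ball (0 : Ed d) 1)).toReal :=
      ENNReal.toReal_pos (measure_ball_pos _ _ one_pos).ne' measure_ball_lt_top.ne
    have := i.pos
    positivity
  have hsmall : ∀ᶠ x in 𝓝[≠] (0 : Ed d), x ≠ 0 ∧ 2 * ‖x‖ ≤ R ∧ 2 * ‖x‖ ≤ 1 := by
    filter_upwards [self_mem_nhdsWithin, eventually_nhdsWithin_of_eventually_nhds
      (closedBall_mem_nhds (0 : Ed d) (lt_min (half_pos hR) one_half_pos))] with x hx0 hx
    rw [dist_zero_right, le_min_iff] at hx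
    exact ⟨hx0, by linarith, by linarith⟩
  have hbound : ∃ᶠ x in 𝓝[≠] (0 : Ed d), x ≠ 0 ∧
      ENNReal.ofReal (c * ‖x‖ ^ (n * (p - 1) + (n / β + 1) * d - 2 * k : ℝ)) ≤ mik d s p u i k :=
    (h.and_eventually hsmall).mono fun x ⟨⟨hcone, hux⟩, hx0, hxR, hx1⟩ =>
      ⟨hx0, ofReal_mul_rpow_le_mik hs hp hC hβ hu hx0 hxR hx1 hcone hux.le k⟩
  constructor
  · obtain ⟨x, hx0, hx⟩ := hbound.exists
    have : 0 < ‖x‖ := norm_pos_iff.2 hx0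
    exact (lt_of_lt_of_le (ENNReal.ofReal_pos.2 (by positivity)) hx).ne'
  · intro hk
    have hlim : Tendsto (fun x : Ed d =>
        ENNReal.ofReal (c * ‖x‖ ^ (n * (p - 1) + (n / β + 1) * d - 2 * k : ℝ))) (𝓝[≠] 0) (𝓝 ⊤) :=
      ENNReal.tendsto_ofReal_atTop.comp (((tendsto_rpow_neg_nhdsGT_zero (by linarith)).comp
        tendsto_norm_nhdsNE_zero).const_mul_atTop hc)
    exact top_le_iff.1 (le_of_tendsto_of_frequently hlim (hbound.mono fun x hx => hx.2))

theorem eventually_abs_le_mul_norm_pow_of_tsum_eq_top (hs : 0 ≤ s) (hp : 1 ≤ p) (hC : 1 ≤ C)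
    (hβ : 0 < β) (hu : HolderOnWith C β u (closedBall 0 R)) (hR : 0 < R)
    (hcar : ∑' k : ℕ, (mik d s p u i (k + 1) ^ ((1 : ℝ) / (2 * ((k : ℝ) + 1))))⁻¹ = ⊤) (n : ℕ) :
    ∀ᶠ x in 𝓝[≠] (0 : Ed d), ‖x‖ ≤ d * |x i| → |u x| ≤ 2 * C * ‖x‖ ^ n := by
  by_contra h
  simp only [not_eventually, Classical.not_imp, not_le] at h
  have hmik := mik_ne_zero_and_eq_top_of_frequently hs hp hC hβ hu hR h
  refine ENNReal.tsum_inv_rpow_ne_top (fun k => by positivity) (fun k => (hmik _).1) ?_ hcar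
  filter_upwards [eventually_gt_atTop ⌈n * (p - 1) + (n / β + 1) * d⌉₊] with k hk
  refine (hmik _).2 ((Nat.lt_of_ceil_lt hk).trans_le ?_)
  push_cast
  linarith

end Moments

theorem carleman_implies_infinite_order_vanishing_general
    (d : ℕ) (hd : 1 ≤ d) (s p : ℝ) (hs : s ∈ Ioo (0 : ℝ) 1) (hp : 1 < p)
    (R₀ : ℝ) (hR₀ : R₀ ∈ Ioo (0 : ℝ) 1)
    (u : Ed d → ℝ) (β : ℝ) (hβ_pos : 0 < β)
    (hreg : ∃ C : ℝ≥0, HolderOnWith C β.toNNReal u (closedBall (0 : Ed d) R₀))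
    (hcar : carleman d s p u) :
    ∀ n : ℕ, ∃ C > (0 : ℝ), ∃ δ > (0 : ℝ), ∀ x : Ed d, ‖x‖ < δ → |u x| ≤ C * ‖x‖ ^ n := by
  obtain ⟨C₀, hC₀⟩ := hreg
  set C := max C₀ 1
  have hu : HolderOnWith C β.toNNReal u (closedBall 0 R₀) := hC₀.mono_const (le_max_left _ _)
  have hβ : 0 < β.toNNReal := Real.toNNReal_pos.2 hβ_pos
  have : Nonempty (Fin d) := ⟨⟨0, hd⟩⟩
  intro n
  have hpunct : ∀ᶠ x in 𝓝[≠] (0 : Ed d), |u x| ≤ 2 * C * ‖x‖ ^ n := by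
    filter_upwards [eventually_all.2 fun i => eventually_abs_le_mul_norm_pow_of_tsum_eq_top
      hs.1.le hp.le (le_max_right _ _) hβ hu hR₀.1 (hcar i) n] with x hx
    obtain ⟨i, hi⟩ := EuclideanSpace.exists_norm_le_card_mul_abs_apply x
    exact hx i (by simpa using hi)
  have hcont : ContinuousAt u 0 :=
    (hu.continuousOn hβ).continuousAt (closedBall_mem_nhds 0 hR₀.1)
  have hbound_cont : Continuous fun x : Ed d => 2 * (C : ℝ) * ‖x‖ ^ n := by fun_prop
  have h0 : |u 0| ≤ 2 * C * ‖(0 : Ed d)‖ ^ n :=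
    le_of_tendsto_of_tendsto (hcont.abs.tendsto.mono_left nhdsWithin_le_nhds)
      (hbound_cont.continuousAt.tendsto.mono_left nhdsWithin_le_nhds) hpunct
  have hnhds : ∀ᶠ x in 𝓝 (0 : Ed d), |u x| ≤ 2 * C * ‖x‖ ^ n := by
    rw [← nhdsNE_sup_pure, eventually_sup, eventually_pure]
    exact ⟨hpunct, h0⟩
  obtain ⟨δ, hδ, hball⟩ := Metric.eventually_nhds_iff.1 hnhds
  exact ⟨2 * C, by positivity, δ, hδ, fun x hx => hball (by rwa [dist_zero_right])⟩

/-- If `u` is `β`-Hölder continuous on the closed ball `B_{R₀}(0)` and the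
Carleman condition holds, then `u` vanishes to infinite order at the origin: for every
`n ∈ ℕ` there is `C > 0` with `|u(x)| ≤ C |x|^n` in a neighborhood of `0`. -/
theorem carleman_implies_infinite_order_vanishing
    (d : ℕ) (hd : 1 ≤ d) (s p : ℝ) (hs : s ∈ Ioo (0 : ℝ) 1) (hp : 1 < p)
    (R₀ : ℝ) (hR₀ : R₀ ∈ Ioo (0 : ℝ) 1)
    (u : Ed d → ℝ) (β : ℝ) (hβ_pos : 0 < β) (hβ_le : β ≤ 1)
    (hreg : ∃ C : ℝ≥0, HolderOnWith C β.toNNReal u (closedBall (0 : Ed d) R₀))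
    (hcar : carleman d s p u) :
    ∀ n : ℕ, ∃ C > (0 : ℝ), ∃ δ > (0 : ℝ), ∀ x : Ed d, ‖x‖ < δ → |u x| ≤ C * ‖x‖ ^ n :=
  carleman_implies_infinite_order_vanishing_general d hd s p hs hp R₀ hR₀ u β hβ_pos hreg hcar
end
end

section
/- Let d ≥ 1, s ∈ (0,1), p ∈ [2,∞), R₀ ∈ (0,1), k ∈ ℕ, and let u : ℝ^d → ℝ be of class C^{1,α} on the ball B_{R₀}(0) for some α > 1 − (1−s)p, with u vanishing to infinite order at 0 (for every n ∈ ℕ, u(x) = O(|x|^n) as |x| → 0). For ε > 0 and x ∈ ℝ^d define W₁(x,ε) := (1/2) ∫_{B_{(k+1)ε}(0)} [J_p(u(x)−u(x+h)) + J_p(u(x)−u(x−h))] |h|^{−d−sp} dh. Then W₁ converges to zero of arbitrary order: for every n ∈ ℕ there exist C > 0 and ε₁ > 0 such that sup_{x ∈ B_{kε}(0)} |W₁(x,ε)| ≤ C ε^n for all ε ∈ (0,ε₁). -/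
/-
Write `a = u x - u (x + h)` and `b = u x - u (x - h)`. As `J_p` is odd with
`J_p'(t) = (p - 1) |t| ^ (p - 2)`, the mean value theorem gives
`|J_p a + J_p b| ≤ (p - 1) max(|a|, |b|) ^ (p - 2) |a + b|`. The `C^{1,α}` hypothesis yields
`|a|, |b| ≲ |h|` and `|a + b| ≲ |h| ^ (1 + α)`, while vanishing to order `N` yields
`|a + b| ≲ ρ ^ N` on `B_ρ(0)`. Interpolating the two bounds on `|a + b|` with a small weight `θ`
keeps the kernel integrable near `h = 0` (this is where `α > 1 - (1 - s) p` enters) and leaves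
a factor `ρ ^ (N θ)`; as `N` is arbitrary, so is the order of decay.
-/

open MeasureTheory Filter Asymptotics Metric Set NNReal ENNReal

noncomputable section

theorem Jp_neg (p t : ℝ) : Jp p (-t) = -Jp p t := by
  simp [Jp]

theorem hasDerivAt_Jp {p : ℝ} (hp : 2 ≤ p) (t : ℝ) :
    HasDerivAt (Jp p) ((p - 1) * |t| ^ (p - 2)) t := by
  rcases eq_or_ne t 0 with rfl | ht
  · -- the difference quotient at `0` is `|y| ^ (p - 2)`
    have hval : (p - 1) * |(0 : ℝ)| ^ (p - 2) = |(0 : ℝ)| ^ (p - 2) := by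
      rcases hp.eq_or_lt with rfl | hp
      · norm_num
      · simp [Real.zero_rpow (by linarith : p - 2 ≠ 0)]
    rw [hval, hasDerivAt_iff_tendsto_slope]
    refine ((continuous_abs.rpow_const fun _ => Or.inr (by linarith)).tendsto 0
      |>.mono_left nhdsWithin_le_nhds).congr' ?_
    filter_upwards [self_mem_nhdsWithin] with y (hy : y ≠ 0)
    simp [slope_def_field, Jp, hy]
  · have h := ((hasDerivAt_abs ht).rpow_const (p := p - 2) (Or.inl (abs_ne_zero.2 ht))).mul
      (hasDerivAt_id' t)
    refine h.congr_deriv ?_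
    have hsign : (SignType.sign t : ℝ) * |t| ^ (p - 2 - 1) * t = |t| ^ (p - 2) := by
      rw [mul_right_comm, mul_comm _ t, self_mul_sign, mul_comm,
        ← Real.rpow_add_one (abs_ne_zero.2 ht), sub_add_cancel]
    linear_combination (p - 2) * hsign

theorem abs_Jp_sub_Jp_le {p M a c : ℝ} (hp : 2 ≤ p) (ha : |a| ≤ M) (hc : |c| ≤ M) :
    |Jp p a - Jp p c| ≤ (p - 1) * M ^ (p - 2) * |a - c| := by
  have hbound : ∀ z ∈ closedBall (0 : ℝ) M, ‖(p - 1) * |z| ^ (p - 2)‖ ≤ (p - 1) * M ^ (p - 2) := by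
    intro z hz
    rw [mem_closedBall_zero_iff, Real.norm_eq_abs] at hz
    have hp1 : 0 ≤ p - 1 := by linarith
    rw [Real.norm_eq_abs, abs_of_nonneg (by positivity)]
    gcongr
  simpa [Real.norm_eq_abs] using
    (convex_closedBall (0 : ℝ) M).norm_image_sub_le_of_norm_hasDerivWithin_le
      (fun z _ => (hasDerivAt_Jp hp z).hasDerivWithinAt) hbound
      (mem_closedBall_zero_iff.2 hc) (mem_closedBall_zero_iff.2 ha)

theorem le_rpow_mul_rpow_of_le_of_le {t X Y θ : ℝ} (ht : 0 ≤ t) (hX : t ≤ X) (hY : t ≤ Y)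
    (hθ₀ : 0 ≤ θ) (hθ₁ : θ ≤ 1) : t ≤ X ^ (1 - θ) * Y ^ θ :=
  calc t = t ^ (1 - θ) * t ^ θ := by
        rw [← Real.rpow_add' ht (by norm_num), sub_add_cancel, Real.rpow_one]
    _ ≤ X ^ (1 - θ) * Y ^ θ := by
        have := ht.trans hX
        gcongr

theorem abs_Jp_add_Jp_le {p θ β L C S t a b : ℝ} (hp : 2 ≤ p) (hθ₀ : 0 ≤ θ) (hθ₁ : θ ≤ 1)
    (hβ : 0 ≤ β) (hL : 0 ≤ L) (hC : 0 ≤ C) (ht : 0 ≤ t) (ha : |a| ≤ L * t) (hb : |b| ≤ L * t)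
    (habC : |a + b| ≤ C * t ^ β) (habS : |a + b| ≤ S) :
    |Jp p a + Jp p b| ≤ (p - 1) * L ^ (p - 2) * C ^ (1 - θ) * S ^ θ * t ^ (p - 2 + β * (1 - θ)) :=
  calc |Jp p a + Jp p b| = |Jp p a - Jp p (-b)| := by rw [Jp_neg, sub_neg_eq_add]
    _ ≤ (p - 1) * (L * t) ^ (p - 2) * |a + b| := by
        have := abs_Jp_sub_Jp_le hp ha (c := -b) (by rwa [abs_neg])
        rwa [sub_neg_eq_add] at this
    _ ≤ (p - 1) * (L * t) ^ (p - 2) * ((C * t ^ β) ^ (1 - θ) * S ^ θ) := by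
        have : 0 ≤ p - 1 := by linarith
        gcongr
        exact le_rpow_mul_rpow_of_le_of_le (abs_nonneg _) habC habS hθ₀ hθ₁
    _ = (p - 1) * L ^ (p - 2) * C ^ (1 - θ) * S ^ θ * t ^ (p - 2 + β * (1 - θ)) := by
        rw [Real.mul_rpow hL ht, Real.mul_rpow hC (by positivity), ← Real.rpow_mul ht,
          Real.rpow_add_of_nonneg ht (by linarith) (by nlinarith)]
        ring

theorem HolderOnWith.norm_le_of_mem_ball {X Y : Type*} [PseudoMetricSpace X]
    [SeminormedAddCommGroup Y] {C α : ℝ≥0} {f : X → Y} {x₀ z : X} {R : ℝ}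
    (hf : HolderOnWith C α f (ball x₀ R)) (hz : z ∈ ball x₀ R) :
    ‖f z‖ ≤ ‖f x₀‖ + C * R ^ (α : ℝ) := by
  have hR := pos_of_mem_ball hz
  have hdist := hf.dist_le hz (mem_ball_self hR)
  rw [dist_eq_norm] at hdist
  calc ‖f z‖ ≤ ‖f x₀‖ + ‖f z - f x₀‖ := norm_le_insert' _ _
    _ ≤ ‖f x₀‖ + C * R ^ (α : ℝ) := by
        gcongr
        refine hdist.trans (by gcongr; exact (mem_ball.1 hz).le)

theorem exists_abs_le_mul_pow_of_isBigO {E : Type*} [SeminormedAddCommGroup E] {u : E → ℝ}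
    {N : ℕ} (hu : u =O[nhds 0] fun x => ‖x‖ ^ N) :
    ∃ c > 0, ∃ δ > 0, ∀ ρ ≤ δ, ∀ z ∈ ball (0 : E) ρ, |u z| ≤ c * ρ ^ N := by
  obtain ⟨c, hc, hO⟩ := hu.exists_pos
  obtain ⟨δ, hδ, hbound⟩ := Metric.eventually_nhds_iff_ball.1 hO.bound
  refine ⟨c, hc, δ, hδ, fun ρ hρ z hz => ?_⟩
  have hz' : ‖z‖ < ρ := by simpa using hz
  calc |u z| ≤ c * ‖z‖ ^ N := by simpa using hbound z (ball_subset_ball hρ hz)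
    _ ≤ c * ρ ^ N := by gcongr

theorem exists_pos_le_one_mul_lt {a b : ℝ} (ha : 0 < a) (hb : 0 < b) :
    ∃ θ : ℝ, 0 < θ ∧ θ ≤ 1 ∧ θ * b < a := by
  refine ⟨min 1 (a / (2 * b)), lt_min one_pos (by positivity), min_le_left _ _, ?_⟩
  calc min 1 (a / (2 * b)) * b ≤ a / (2 * b) * b := by gcongr; exact min_le_right _ _
    _ = a / 2 := by field_simp
    _ < a := by linarith

theorem mul_pow_rpow_le {A ε θ : ℝ} {n N : ℕ} (hA : 0 ≤ A) (hε₀ : 0 < ε) (hε₁ : ε ≤ 1)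
    (hnN : n ≤ N * θ) : (A * ε ^ N) ^ θ ≤ A ^ θ * ε ^ n := by
  rw [Real.mul_rpow hA (by positivity), ← Real.rpow_natCast ε N, ← Real.rpow_mul hε₀.le,
    ← Real.rpow_natCast ε n]
  exact mul_le_mul_of_nonneg_left (Real.rpow_le_rpow_of_exponent_ge hε₀ hε₁ hnN) (by positivity)

section HolderDerivative

variable {E F : Type*} [NormedAddCommGroup E] [NormedSpace ℝ E] [NormedAddCommGroup F]
  [NormedSpace ℝ F] {f : E → F} {s : Set E} {C α : ℝ≥0}

theorem norm_sub_sub_fderiv_le_of_holderOnWith (hs : Convex ℝ s) (hso : IsOpen s)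
    (hf : DifferentiableOn ℝ f s) (hHol : HolderOnWith C α (fderiv ℝ f) s) {x y : E}
    (hx : x ∈ s) (hy : y ∈ s) :
    ‖f y - f x - fderiv ℝ f x (y - x)‖ ≤ C * ‖y - x‖ ^ (α : ℝ) * ‖y - x‖ := by
  refine (hs.inter (convex_closedBall x ‖y - x‖)).norm_image_sub_le_of_norm_fderiv_le'
    (fun z hz => hf.differentiableAt (hso.mem_nhds hz.1)) (fun z hz => ?_)
    ⟨hx, mem_closedBall_self (norm_nonneg _)⟩ ⟨hy, by simp [dist_eq_norm]⟩
  rw [← dist_eq_norm]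
  refine (hHol.dist_le hz.1 hx).trans ?_
  gcongr
  exact hz.2

theorem norm_sub_add_sub_le_of_holderOnWith (hs : Convex ℝ s) (hso : IsOpen s)
    (hf : DifferentiableOn ℝ f s) (hHol : HolderOnWith C α (fderiv ℝ f) s) {x h : E}
    (hx : x ∈ s) (hxh : x + h ∈ s) (hxh' : x - h ∈ s) :
    ‖(f x - f (x + h)) + (f x - f (x - h))‖ ≤ 2 * C * ‖h‖ ^ ((α : ℝ) + 1) := by
  have hfwd := norm_sub_sub_fderiv_le_of_holderOnWith hs hso hf hHol hx hxh
  have hbwd := norm_sub_sub_fderiv_le_of_holderOnWith hs hso hf hHol hx hxh'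
  simp only [add_sub_cancel_left, sub_sub_cancel_left, norm_neg] at hfwd hbwd
  rw [Real.rpow_add_one' (norm_nonneg h) (by positivity)]
  calc ‖(f x - f (x + h)) + (f x - f (x - h))‖
      = ‖(f (x + h) - f x - fderiv ℝ f x h) + (f (x - h) - f x - fderiv ℝ f x (-h))‖ := by
        rw [← norm_neg, map_neg]; congr 1; abel
    _ ≤ ‖f (x + h) - f x - fderiv ℝ f x h‖ + ‖f (x - h) - f x - fderiv ℝ f x (-h)‖ :=
        norm_add_le _ _
    _ ≤ 2 * C * (‖h‖ ^ (α : ℝ) * ‖h‖) := by linarith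

theorem abs_Jp_add_Jp_le_of_holderOnWith {u : E → ℝ} {p θ L S : ℝ} (hp : 2 ≤ p) (hθ₀ : 0 ≤ θ)
    (hθ₁ : θ ≤ 1) (hs : Convex ℝ s) (hso : IsOpen s) (hu : DifferentiableOn ℝ u s)
    (hHol : HolderOnWith C α (fderiv ℝ u) s) (hL : ∀ z ∈ s, ‖fderiv ℝ u z‖ ≤ L)
    (hS : ∀ z ∈ s, |u z| ≤ S) {x h : E} (hx : x ∈ s) (hxh : x + h ∈ s) (hxh' : x - h ∈ s) :
    |Jp p (u x - u (x + h)) + Jp p (u x - u (x - h))| ≤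
      (p - 1) * L ^ (p - 2) * (2 * C) ^ (1 - θ) * (4 * S) ^ θ *
        ‖h‖ ^ (p - 2 + ((α : ℝ) + 1) * (1 - θ)) := by
  have hdiff : ∀ z ∈ s, DifferentiableAt ℝ u z := fun z hz => hu.differentiableAt (hso.mem_nhds hz)
  have hlip : ∀ y ∈ s, |u x - u y| ≤ L * ‖y - x‖ := fun y hy => by
    simpa [abs_sub_comm] using hs.norm_image_sub_le_of_norm_fderiv_le hdiff hL hx hy
  refine abs_Jp_add_Jp_le hp hθ₀ hθ₁ (by positivity) ((norm_nonneg _).trans (hL x hx))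
    (by positivity) (norm_nonneg h) (by simpa using hlip _ hxh) (by simpa using hlip _ hxh')
    (by simpa using norm_sub_add_sub_le_of_holderOnWith hs hso hu hHol hx hxh hxh') ?_
  have := hS x hx; have := hS _ hxh; have := hS _ hxh'
  calc |(u x - u (x + h)) + (u x - u (x - h))|
      ≤ |u x| + |u (x + h)| + (|u x| + |u (x - h)|) :=
        (abs_add_le _ _).trans (add_le_add (abs_sub _ _) (abs_sub _ _))
    _ ≤ 4 * S := by linarith

end HolderDerivative

section RieszKernel

variable {E : Type*} [NormedAddCommGroup E] [NormedSpace ℝ E] [FiniteDimensional ℝ E]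
  [MeasurableSpace E] [BorelSpace E] (μ : Measure E) [μ.IsAddHaarMeasure]

theorem abs_setIntegral_ball_div_rpow_le (hE : 1 ≤ Module.finrank ℝ E) {G : E → ℝ}
    {T c σ r : ℝ} (hc : 0 < c) (hσ : 0 ≤ σ) (hT : 0 ≤ T) (hr : r ≤ 1)
    (hG : ∀ h ∈ ball (0 : E) r, |G h| ≤ T * ‖h‖ ^ (σ + c)) :
    |∫ h in ball (0 : E) r, G h / ‖h‖ ^ ((Module.finrank ℝ E : ℝ) + σ) ∂μ| ≤
      T * ∫ h in ball (0 : E) 1, ‖h‖ ^ (c - Module.finrank ℝ E) ∂μ := by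
  set n : ℝ := (Module.finrank ℝ E : ℝ)
  have hn : 1 ≤ n := by simpa [n] using hE
  have hint : IntegrableOn (fun h : E => T * ‖h‖ ^ (c - n)) (ball 0 1) μ :=
    (integrableOn_ball_of_norm_le_rpow hE (α := n - c) (C := 1) (by linarith)
      (ae_of_all _ fun h => by simp [abs_of_nonneg, Real.rpow_nonneg])
      (measurable_norm.pow_const _).aestronglyMeasurable).const_mul T
  have hpt : ∀ h ∈ ball (0 : E) r, ‖G h / ‖h‖ ^ (n + σ)‖ ≤ T * ‖h‖ ^ (c - n) := by
    intro h hh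
    rcases eq_or_ne h 0 with rfl | h0
    · simp [Real.zero_rpow (by linarith : n + σ ≠ 0)]
      positivity
    have hpos : 0 < ‖h‖ := norm_pos_iff.2 h0
    rw [norm_div, Real.norm_eq_abs, Real.norm_eq_abs, abs_of_pos (Real.rpow_pos_of_pos hpos _),
      div_le_iff₀ (by positivity), mul_assoc, ← Real.rpow_add hpos,
      show c - n + (n + σ) = σ + c by ring]
    exact hG h hh
  calc |∫ h in ball (0 : E) r, G h / ‖h‖ ^ (n + σ) ∂μ|
      ≤ ∫ h in ball (0 : E) r, T * ‖h‖ ^ (c - n) ∂μ :=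
        norm_integral_le_of_norm_le (hint.mono_set (ball_subset_ball hr))
          ((ae_restrict_mem measurableSet_ball).mono hpt)
    _ ≤ ∫ h in ball (0 : E) 1, T * ‖h‖ ^ (c - n) ∂μ :=
        setIntegral_mono_set hint (ae_of_all _ fun h => by positivity)
          (ball_subset_ball hr).eventuallyLE
    _ = T * ∫ h in ball (0 : E) 1, ‖h‖ ^ (c - n) ∂μ := integral_const_mul T _

theorem abs_setIntegral_Jp_add_Jp_le (hE : 1 ≤ Module.finrank ℝ E) {u : E → ℝ} {s : Set E}
    {C α : ℝ≥0} {p θ σ L S r : ℝ} {x : E} (hp : 2 ≤ p) (hθ₀ : 0 ≤ θ) (hθ₁ : θ ≤ 1) (hσ : 0 ≤ σ)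
    (hσθ : σ < p - 2 + ((α : ℝ) + 1) * (1 - θ)) (hs : Convex ℝ s) (hso : IsOpen s)
    (hu : DifferentiableOn ℝ u s) (hHol : HolderOnWith C α (fderiv ℝ u) s)
    (hL : ∀ z ∈ s, ‖fderiv ℝ u z‖ ≤ L) (hS : ∀ z ∈ s, |u z| ≤ S) (hr₀ : 0 < r)
    (hr : r ≤ 1) (hxs : ball x r ⊆ s) :
    |∫ h in ball (0 : E) r, (Jp p (u x - u (x + h)) + Jp p (u x - u (x - h))) /
        ‖h‖ ^ ((Module.finrank ℝ E : ℝ) + σ) ∂μ| ≤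
      (p - 1) * L ^ (p - 2) * (2 * C) ^ (1 - θ) * (4 * S) ^ θ *
        ∫ h in ball (0 : E) 1,
          ‖h‖ ^ (p - 2 + ((α : ℝ) + 1) * (1 - θ) - σ - Module.finrank ℝ E) ∂μ := by
  refine abs_setIntegral_ball_div_rpow_le μ hE (sub_pos.2 hσθ) hσ ?_ hr fun h hh => ?_
  · have hx : x ∈ s := hxs (mem_ball_self hr₀)
    have := (norm_nonneg _).trans (hL x hx)
    have := (abs_nonneg _).trans (hS x hx)
    have : 0 ≤ p - 1 := by linarith
    positivity
  have hh' : ‖h‖ < r := by simpa using hh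
  rw [add_sub_cancel]
  exact abs_Jp_add_Jp_le_of_holderOnWith hp hθ₀ hθ₁ hs hso hu hHol hL hS
    (hxs (mem_ball_self hr₀)) (hxs (by simpa [dist_eq_norm] using hh'))
    (hxs (by simpa [dist_eq_norm] using hh'))

theorem exists_abs_setIntegral_Jp_add_Jp_le_mul_pow (hE : 1 ≤ Module.finrank ℝ E) {u : E → ℝ}
    {C α : ℝ≥0} {p σ R : ℝ} (hp : 2 ≤ p) (hσ : 0 ≤ σ) (hσα : σ < p - 1 + α) (hR : 0 < R)
    (hu : DifferentiableOn ℝ u (ball 0 R)) (hHol : HolderOnWith C α (fderiv ℝ u) (ball 0 R))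
    (hvan : ∀ N : ℕ, u =O[nhds 0] fun x => ‖x‖ ^ N) (n : ℕ) :
    ∃ M ≥ 0, ∃ ρ₀ > 0, ∀ ρ ≤ ρ₀, ∀ (x : E) (r : ℝ), 0 < r → ‖x‖ + r ≤ ρ →
      |∫ h in ball (0 : E) r, (Jp p (u x - u (x + h)) + Jp p (u x - u (x - h))) /
          ‖h‖ ^ ((Module.finrank ℝ E : ℝ) + σ) ∂μ| ≤ M * ρ ^ n := by
  obtain ⟨θ, hθ₀, hθ₁, hθα⟩ :=
    exists_pos_le_one_mul_lt (a := p - 1 + α - σ) (b := α + 1) (by linarith) (by positivity)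
  set N := ⌈n / θ⌉₊
  have hnN : (n : ℝ) ≤ N * θ := (div_le_iff₀ hθ₀).1 (Nat.le_ceil _)
  obtain ⟨c, hc, δ, hδ, hS⟩ := exists_abs_le_mul_pow_of_isBigO (hvan N)
  set L := ‖fderiv ℝ u 0‖ + C * R ^ (α : ℝ)
  set K := ∫ h in ball (0 : E) 1,
    ‖h‖ ^ (p - 2 + ((α : ℝ) + 1) * (1 - θ) - σ - Module.finrank ℝ E) ∂μ
  have hL : 0 ≤ L := by positivity
  have hK : 0 ≤ K := setIntegral_nonneg measurableSet_ball fun _ _ => by positivity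
  have hp1 : 0 ≤ p - 1 := by linarith
  refine ⟨(p - 1) * L ^ (p - 2) * (2 * C) ^ (1 - θ) * (4 * c) ^ θ * K, by positivity,
    min (min δ R) 1, by positivity, fun ρ hρ x r hr hxr => ?_⟩
  have hρ₀ : 0 < ρ := by linarith [norm_nonneg x]
  have hρR : ρ ≤ R := hρ.trans ((min_le_left _ _).trans (min_le_right _ _))
  have hρ₁ : ρ ≤ 1 := hρ.trans (min_le_right _ _)
  calc _ ≤ (p - 1) * L ^ (p - 2) * (2 * C) ^ (1 - θ) * (4 * (c * ρ ^ N)) ^ θ * K :=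
        abs_setIntegral_Jp_add_Jp_le μ hE hp hθ₀.le hθ₁ hσ (by linarith) (convex_ball 0 ρ)
          isOpen_ball (hu.mono (ball_subset_ball hρR)) (hHol.mono (ball_subset_ball hρR))
          (fun z hz => hHol.norm_le_of_mem_ball (ball_subset_ball hρR hz))
          (hS ρ (hρ.trans ((min_le_left _ _).trans (min_le_left _ _)))) hr
          (by linarith [norm_nonneg x])
          (ball_subset_ball' (by rwa [dist_zero_right, add_comm]))
    _ ≤ (p - 1) * L ^ (p - 2) * (2 * C) ^ (1 - θ) * ((4 * c) ^ θ * ρ ^ n) * K := by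
        rw [← mul_assoc]; gcongr; exact mul_pow_rpow_le (by positivity) hρ₀ hρ₁ hnN
    _ = (p - 1) * L ^ (p - 2) * (2 * C) ^ (1 - θ) * (4 * c) ^ θ * K * ρ ^ n := by ring

end RieszKernel

theorem claimA_C1alpha_p_ge_two_general
    (d : ℕ) (hd : 1 ≤ d) (s p : ℝ) (hs : s ∈ Ioo (0 : ℝ) 1) (hp : 2 ≤ p)
    (R₀ : ℝ) (hR₀ : R₀ ∈ Ioo (0 : ℝ) 1) (k : ℕ)
    (u : Ed d → ℝ)
    (α : ℝ≥0) (hα : 1 - (1 - s) * p < (α : ℝ))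
    (hdiff : DifferentiableOn ℝ u (ball (0 : Ed d) R₀))
    (hHol : ∃ C : ℝ≥0, HolderOnWith C α (fderiv ℝ u) (ball (0 : Ed d) R₀))
    (hvan : ∀ n : ℕ, u =O[nhds (0 : Ed d)] fun x => ‖x‖ ^ n) :
    ∀ n : ℕ, ∃ C > (0 : ℝ), ∃ ε₁ > (0 : ℝ), ∀ ε ∈ Ioo (0 : ℝ) ε₁,
      ∀ x ∈ ball (0 : Ed d) (k * ε),
        |(1 / 2) * ∫ h in ball (0 : Ed d) ((k + 1) * ε),
            (Jp p (u x - u (x + h)) + Jp p (u x - u (x - h))) / ‖h‖ ^ ((d : ℝ) + s * p)|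
          ≤ C * ε ^ n := by
  intro n
  obtain ⟨CH, hCH⟩ := hHol
  obtain ⟨M, hM, ρ₀, hρ₀, hbound⟩ := exists_abs_setIntegral_Jp_add_Jp_le_mul_pow volume
    (σ := s * p) (by simpa using hd) hp (by have := hs.1; positivity) (by linarith) hR₀.1 hdiff
    hCH hvan n
  refine ⟨(M + 1) * (2 * k + 1) ^ n, by positivity, ρ₀ / (2 * k + 1), by positivity,
    fun ε ⟨hε₀, hε⟩ x hx => ?_⟩
  have hx' : ‖x‖ < k * ε := mem_ball_zero_iff.1 hx
  have hερ : (2 * k + 1) * ε ≤ ρ₀ := (lt_div_iff₀' (by positivity)).1 hε |>.le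
  have hW := hbound _ hερ x ((k + 1) * ε) (by positivity) (by linarith)
  simp only [finrank_euclideanSpace_fin] at hW
  rw [abs_mul, abs_of_pos one_half_pos]
  calc _ ≤ 1 / 2 * (M * ((2 * k + 1) * ε) ^ n) := by gcongr
    _ ≤ (M + 1) * ((2 * k + 1) * ε) ^ n := by
        nlinarith [pow_pos (by positivity : 0 < (2 * k + 1) * ε) n]
    _ = (M + 1) * (2 * k + 1) ^ n * ε ^ n := by rw [mul_pow, mul_assoc]

/-- Claim A, case `p ≥ 2`, `u ∈ C^{1,α}`. If `u` is `C^{1,α}` on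
`B_{R₀}(0)` with `α > 1-(1-s)p` and vanishes to infinite order at `0`, then
`W₁(x,ε) = (1/2)∫_{B_{(k+1)ε}(0)} [J_p(u(x)-u(x+h)) + J_p(u(x)-u(x-h))] |h|^{-d-sp} dh`
converges to zero of arbitrary order, uniformly for `x ∈ B_{kε}(0)`. -/
theorem claimA_C1alpha_p_ge_two
    (d : ℕ) (hd : 1 ≤ d) (s p : ℝ) (hs : s ∈ Ioo (0 : ℝ) 1) (hp : 2 ≤ p)
    (R₀ : ℝ) (hR₀ : R₀ ∈ Ioo (0 : ℝ) 1) (k : ℕ)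
    (u : Ed d → ℝ)
    (α : ℝ≥0) (hα_pos : 0 < α) (hα_le : (α : ℝ) ≤ 1) (hα : 1 - (1 - s) * p < (α : ℝ))
    (hdiff : DifferentiableOn ℝ u (ball (0 : Ed d) R₀))
    (hHol : ∃ C : ℝ≥0, HolderOnWith C α (fderiv ℝ u) (ball (0 : Ed d) R₀))
    (hvan : ∀ n : ℕ, u =O[nhds (0 : Ed d)] fun x => ‖x‖ ^ n) :
    ∀ n : ℕ, ∃ C > (0 : ℝ), ∃ ε₁ > (0 : ℝ), ∀ ε ∈ Ioo (0 : ℝ) ε₁,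
      ∀ x ∈ ball (0 : Ed d) (k * ε),
        |(1 / 2) * ∫ h in ball (0 : Ed d) ((k + 1) * ε),
            (Jp p (u x - u (x + h)) + Jp p (u x - u (x - h))) / ‖h‖ ^ ((d : ℝ) + s * p)|
          ≤ C * ε ^ n :=
  claimA_C1alpha_p_ge_two_general d hd s p hs hp R₀ hR₀ k u α hα hdiff hHol hvan
end
end

section
/- Let d ≥ 1, s ∈ (0,1), p ∈ (1,∞), R₀ ∈ (0,1), k ∈ ℕ, and let u : ℝ^d → ℝ be β-Hölder continuous on the ball B_{R₀}(0) for some β with sp/(p−1) < β ≤ 1, with u vanishing to infinite order at 0 (for every n ∈ ℕ, u(x) = O(|x|^n) as |x| → 0). For ε > 0 and x ∈ ℝ^d define W₁(x,ε) := (1/2) ∫_{B_{(k+1)ε}(0)} [J_p(u(x)−u(x+h)) + J_p(u(x)−u(x−h))] |h|^{−d−sp} dh. Then for every n ∈ ℕ there exist C > 0 and ε₁ > 0 such that sup_{x ∈ B_{kε}(0)} |W₁(x,ε)| ≤ C ε^n for all ε ∈ (0,ε₁). -/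
open MeasureTheory Filter Asymptotics Metric Set NNReal ENNReal

noncomputable section

lemma abs_Jp {p : ℝ} (hp : 1 < p) (t : ℝ) : |Jp p t| = |t| ^ (p - 1) := by
  rw [Jp]
  rcases eq_or_ne t 0 with rfl | ht
  · simp [Real.zero_rpow (show p - 1 ≠ 0 by linarith)]
  · have h0 : (0:ℝ) < |t| := abs_pos.2 ht
    rw [abs_mul, abs_of_nonneg (Real.rpow_nonneg (abs_nonneg t) _),
      show p - 1 = (p - 2) + 1 by ring, Real.rpow_add h0, Real.rpow_one]


lemma ball_rpow_lintegral_le (d : ℕ) (hd : 1 ≤ d) (c : ℝ) (hc : -(d:ℝ) < c) (hc0 : c < 0) :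
    ∃ K : ℝ≥0∞, K ≠ ⊤ ∧ ∀ R : ℝ, 0 < R →
      (∫⁻ h in ball (0 : Ed d) R, ENNReal.ofReal (‖h‖ ^ c)) ≤ ENNReal.ofReal (R ^ (c + d)) * K := by
  haveI : Nontrivial (Ed d) := ⟨⟨0, EuclideanSpace.single ⟨0, hd⟩ 1, by
    intro h
    have := congrArg (fun f : Ed d => f ⟨0, hd⟩) h
    simp [EuclideanSpace.single_apply] at this⟩⟩
  set t : ℝ := (2:ℝ)⁻¹ with ht
  have ht0 : (0:ℝ) < t := by norm_num
  have ht1 : t < 1 := by norm_num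
  set ρ : ℝ := t ^ (c + d) with hρ
  have hρ0 : 0 < ρ := Real.rpow_pos_of_pos ht0 _
  have hρ1 : ρ < 1 := Real.rpow_lt_one ht0.le ht1 (by linarith)
  set V : ℝ≥0∞ := volume (ball (0 : Ed d) 1) with hV
  have hVfin : V ≠ ⊤ := measure_ball_lt_top.ne
  refine ⟨ENNReal.ofReal (t ^ c) * V * (1 - ENNReal.ofReal ρ)⁻¹, ?_, ?_⟩
  · apply ENNReal.mul_ne_top (ENNReal.mul_ne_top ENNReal.ofReal_ne_top hVfin)
    rw [ENNReal.inv_ne_top]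
    have : ENNReal.ofReal ρ < 1 := by
      rw [← ENNReal.ofReal_one]; exact ENNReal.ofReal_lt_ofReal_iff_of_nonneg hρ0.le |>.2 hρ1
    exact (tsub_pos_of_lt this).ne'
  intro R hR
  set g : Ed d → ℝ≥0∞ := fun h => ENNReal.ofReal (‖h‖ ^ c) with hg
  set S : ℕ → Set (Ed d) := fun j => ball (0 : Ed d) (R * t ^ j) \ ball (0 : Ed d) (R * t ^ (j+1)) with hS
  have hsub : ball (0 : Ed d) R ⊆ {(0:Ed d)} ∪ ⋃ j, S j := by
    intro x hx
    rcases eq_or_ne x 0 with rfl | hx0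
    · exact Or.inl rfl
    right
    have hxn : 0 < ‖x‖ := norm_pos_iff.2 hx0
    have hxR : ‖x‖ < R := by simpa [dist_eq_norm] using hx
    have hex : ∃ j : ℕ, R * t ^ (j+1) ≤ ‖x‖ := by
      obtain ⟨j, hj⟩ := exists_pow_lt_of_lt_one (div_pos hxn hR) ht1
      exact ⟨j, by
        have : t ^ (j+1) ≤ t ^ j := pow_le_pow_of_le_one ht0.le ht1.le (by omega)
        nlinarith [(lt_div_iff₀ hR).1 hj]⟩
    set j₀ := Nat.find hex with hj₀
    refine mem_iUnion.2 ⟨j₀, ⟨?_, ?_⟩⟩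
    · simp only [mem_ball, dist_zero_right]
      rcases Nat.eq_zero_or_pos j₀ with h0 | h0
      · rw [h0]; simpa using hxR
      · have := Nat.find_min hex (m := j₀ - 1) (by omega)
        push_neg at this
        simpa [Nat.sub_add_cancel h0] using this
    · simp only [mem_ball, dist_zero_right, not_lt]
      exact Nat.find_spec hex
  calc ∫⁻ h in ball (0 : Ed d) R, g h
      ≤ ∫⁻ h in ({(0:Ed d)} ∪ ⋃ j, S j), g h := lintegral_mono_set hsub
    _ ≤ (∫⁻ h in ({(0:Ed d)} : Set (Ed d)), g h) + ∫⁻ h in ⋃ j, S j, g h := lintegral_union_le _ _ _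
    _ ≤ 0 + ∑' j, ∫⁻ h in S j, g h := by
        gcongr
        · rw [lintegral_singleton]
          simp [hg, Real.zero_rpow hc0.ne]
        · exact lintegral_iUnion_le _ _
    _ ≤ ∑' j : ℕ, ENNReal.ofReal (R ^ (c + (d:ℝ)) * t ^ c * ρ ^ j) * V := by
        rw [zero_add]
        refine ENNReal.tsum_le_tsum fun j => ?_
        have hb : ∀ h ∈ S j, g h ≤ ENNReal.ofReal ((R * t ^ (j+1)) ^ c) := by
          intro h hh
          have h1 : R * t ^ (j+1) ≤ ‖h‖ := by
            have := hh.2; simp only [mem_ball, dist_zero_right, not_lt] at this; exact this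
          exact ENNReal.ofReal_le_ofReal
            (Real.rpow_le_rpow_of_nonpos (by positivity) h1 hc0.le)
        calc ∫⁻ h in S j, g h
            ≤ ∫⁻ _ in S j, ENNReal.ofReal ((R * t ^ (j+1)) ^ c) :=
              setLIntegral_mono' (measurableSet_ball.diff measurableSet_ball) hb
          _ = ENNReal.ofReal ((R * t ^ (j+1)) ^ c) * volume (S j) := setLIntegral_const _ _
          _ ≤ ENNReal.ofReal ((R * t ^ (j+1)) ^ c) * volume (ball (0 : Ed d) (R * t ^ j)) := by
              gcongr; exact diff_subset
          _ = ENNReal.ofReal ((R * t ^ (j+1)) ^ c) *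
                (ENNReal.ofReal ((R * t ^ j) ^ (d:ℕ)) * V) := by
              rw [Measure.addHaar_ball _ _ (by positivity), finrank_euclideanSpace_fin]
          _ = ENNReal.ofReal (R ^ (c + (d:ℝ)) * t ^ c * ρ ^ j) * V := by
              rw [← mul_assoc, ← ENNReal.ofReal_mul (by positivity)]
              congr 2
              rw [hρ, Real.mul_rpow hR.le (by positivity), mul_pow,
                ← Real.rpow_natCast t (j+1), ← Real.rpow_natCast t j, ← Real.rpow_natCast R d,
                ← Real.rpow_natCast (t ^ (c + (d:ℝ))) j,
                ← Real.rpow_mul ht0.le, ← Real.rpow_mul ht0.le,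
                ← Real.rpow_natCast (t ^ ((j:ℝ))) d, ← Real.rpow_mul ht0.le]
              push_cast
              rw [Real.rpow_add hR,
                show ((j:ℝ)+1)*c = c + c*(j:ℝ) from by ring,
                show (c+(d:ℝ))*(j:ℝ) = c*(j:ℝ) + (d:ℝ)*(j:ℝ) from by ring,
                show (j:ℝ)*(d:ℝ) = (d:ℝ)*(j:ℝ) from by ring,
                Real.rpow_add ht0 c (c*(j:ℝ)), Real.rpow_add ht0 (c*(j:ℝ)) ((d:ℝ)*(j:ℝ))]
              ring
    _ = ENNReal.ofReal (R ^ (c + (d:ℝ))) * (ENNReal.ofReal (t ^ c) * V * (1 - ENNReal.ofReal ρ)⁻¹) := by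
        have heq : ∀ j : ℕ, ENNReal.ofReal (R ^ (c + (d:ℝ)) * t ^ c * ρ ^ j) * V =
            (ENNReal.ofReal (R ^ (c + (d:ℝ))) * ENNReal.ofReal (t ^ c) * V) * ENNReal.ofReal ρ ^ j := by
          intro j
          rw [ENNReal.ofReal_mul (by positivity), ENNReal.ofReal_mul (by positivity),
            ENNReal.ofReal_pow hρ0.le]
          ring
        simp_rw [heq]
        rw [ENNReal.tsum_mul_left, ENNReal.tsum_geometric]
        ring

set_option maxHeartbeats 2000000 in
/-- Claim A, Hölder case. If `u` is `β`-Hölder continuous on `B_{R₀}(0)`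
with `sp/(p-1) < β ≤ 1` and vanishes to infinite order at `0`, then
`W₁(x,ε) = (1/2)∫_{B_{(k+1)ε}(0)} [J_p(u(x)-u(x+h)) + J_p(u(x)-u(x-h))] |h|^{-d-sp} dh`
converges to zero of arbitrary order, uniformly for `x ∈ B_{kε}(0)`. -/
theorem claimA_Holder
    (d : ℕ) (hd : 1 ≤ d) (s p : ℝ) (hs : s ∈ Ioo (0 : ℝ) 1) (hp : 1 < p)
    (R₀ : ℝ) (hR₀ : R₀ ∈ Ioo (0 : ℝ) 1) (k : ℕ)
    (u : Ed d → ℝ)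
    (β : ℝ) (hβ : s * p / (p - 1) < β) (hβ_le : β ≤ 1)
    (hHol : ∃ C : ℝ≥0, HolderOnWith C β.toNNReal u (ball (0 : Ed d) R₀))
    (hvan : ∀ n : ℕ, u =O[nhds (0 : Ed d)] fun x => ‖x‖ ^ n) :
    ∀ n : ℕ, ∃ C > (0 : ℝ), ∃ ε₁ > (0 : ℝ), ∀ ε ∈ Ioo (0 : ℝ) ε₁,
      ∀ x ∈ ball (0 : Ed d) (k * ε),
        |(1 / 2) * ∫ h in ball (0 : Ed d) ((k + 1) * ε),
            (Jp p (u x - u (x + h)) + Jp p (u x - u (x - h))) / ‖h‖ ^ ((d : ℝ) + s * p)|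
          ≤ C * ε ^ n := by
  intro n
  have hp0 : (0:ℝ) < p := by linarith
  have hq0 : (0:ℝ) < p - 1 := by linarith
  have hsp0 : 0 < s * p := mul_pos hs.1 hp0
  have hβ0 : (0:ℝ) < β := lt_trans (div_pos hsp0 hq0) hβ
  have hβq : s * p < β * (p - 1) := (div_lt_iff₀ hq0).1 hβ
  have hd0 : (0:ℝ) < d := by exact_mod_cast Nat.pos_of_ne_zero (by omega)
  obtain ⟨a, ha0, had, haq⟩ : ∃ a : ℝ, 0 < a ∧ a < d ∧ s*p + a < β*(p-1) := by
    refine ⟨min ((β*(p-1) - s*p)/2) ((d:ℝ)/2), lt_min (by linarith) (by linarith),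
      lt_of_le_of_lt (min_le_right _ _) (by linarith), ?_⟩
    have h1 := min_le_left ((β*(p-1) - s*p)/2) ((d:ℝ)/2)
    linarith
  obtain ⟨e₁, e₂, he₁0, he₂0, hβe₁, hee⟩ :
      ∃ e₁ e₂ : ℝ, 0 < e₁ ∧ 0 < e₂ ∧ β * e₁ = s*p + a ∧ e₁ + e₂ = p - 1 := by
    refine ⟨(s*p + a)/β, (p-1) - (s*p + a)/β, div_pos (by linarith) hβ0, ?_,
      by field_simp, by ring⟩
    have h1 : (s*p + a)/β < p - 1 := (div_lt_iff₀ hβ0).2 (by linarith)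
    linarith
  -- Hölder bound
  obtain ⟨C₁', hHolC⟩ := hHol
  have hC₁0 : (0:ℝ) ≤ (C₁' : ℝ) := C₁'.coe_nonneg
  have hHold : ∀ x ∈ ball (0:Ed d) R₀, ∀ y ∈ ball (0:Ed d) R₀,
      |u x - u y| ≤ (C₁':ℝ) * ‖x - y‖ ^ β := by
    intro x hx y hy
    have h1 := hHolC.edist_le hx hy
    have hfin : (C₁' : ℝ≥0∞) * edist x y ^ ((β.toNNReal : ℝ≥0) : ℝ) ≠ ⊤ :=
      ENNReal.mul_ne_top ENNReal.coe_ne_top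
        (ENNReal.rpow_ne_top_of_nonneg (NNReal.coe_nonneg _) (edist_ne_top _ _))
    have h2 := ENNReal.toReal_mono hfin h1
    rw [ENNReal.toReal_mul, ← ENNReal.toReal_rpow, ENNReal.coe_toReal,
      ← dist_edist, ← dist_edist] at h2
    rwa [Real.dist_eq, dist_eq_norm, Real.coe_toNNReal β hβ0.le] at h2
  -- vanishing bound
  obtain ⟨C₂', hC₂'⟩ := (hvan (⌈(n:ℝ)/e₂⌉₊)).bound
  set n' : ℕ := ⌈(n:ℝ)/e₂⌉₊ with hn'
  have hC₂0 : (0:ℝ) ≤ max C₂' 0 := le_max_right _ _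
  have hev : ∀ᶠ y in nhds (0 : Ed d), ‖u y‖ ≤ max C₂' 0 * ‖y‖ ^ n' := by
    filter_upwards [hC₂'] with y hy
    calc ‖u y‖ ≤ C₂' * ‖‖y‖ ^ n'‖ := hy
      _ ≤ max C₂' 0 * ‖y‖ ^ n' := by
          rw [Real.norm_eq_abs, abs_of_nonneg (pow_nonneg (norm_nonneg y) n')]
          exact mul_le_mul_of_nonneg_right (le_max_left _ _)
            (pow_nonneg (norm_nonneg y) n')
  obtain ⟨r₂, hr₂0, hr₂⟩ := Metric.eventually_nhds_iff.1 hev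
  -- kernel integral bound
  obtain ⟨K, hKfin, hK⟩ := ball_rpow_lintegral_le d hd (a - d) (by linarith) (by linarith)
  have hK'0 : (0:ℝ) ≤ K.toReal := ENNReal.toReal_nonneg
  refine ⟨max ((C₁':ℝ)^e₁ * (2*(max C₂' 0)*(2*(k:ℝ)+1)^n')^e₂ * ((k:ℝ)+1)^a * K.toReal) 1,
    lt_of_lt_of_le one_pos (le_max_right _ _),
    min 1 (min R₀ r₂ / (2*(k:ℝ)+2)),
    lt_min one_pos (div_pos (lt_min hR₀.1 hr₂0) (by positivity)), ?_⟩
  rintro ε ⟨hε0, hε1⟩ x hx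
  have hεle1 : ε < 1 := lt_of_lt_of_le hε1 (min_le_left _ _)
  have hmin0 : 0 < min R₀ r₂ := lt_min hR₀.1 hr₂0
  have hball : (2*(k:ℝ)+1)*ε < min R₀ r₂ := by
    have h2 : ε < min R₀ r₂ / (2*(k:ℝ)+2) := lt_of_lt_of_le hε1 (min_le_right _ _)
    have h3 : ε * (2*(k:ℝ)+2) < min R₀ r₂ := (lt_div_iff₀ (by positivity)).1 h2
    nlinarith
  rw [mem_ball, dist_zero_right] at hx
  have hR0 : (0:ℝ) < ((k:ℝ)+1)*ε := by positivity
  set M : ℝ := (max C₂' 0) * (((2*(k:ℝ)+1)*ε) ^ n') with hM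
  have hM0 : 0 ≤ M := by positivity
  have hsmall : ∀ y : Ed d, ‖y‖ ≤ (2*(k:ℝ)+1)*ε → y ∈ ball (0:Ed d) R₀ ∧ |u y| ≤ M := by
    intro y hy
    have hyR : ‖y‖ < min R₀ r₂ := lt_of_le_of_lt hy hball
    refine ⟨mem_ball_zero_iff.2 (lt_of_lt_of_le hyR (min_le_left _ _)), ?_⟩
    have h4 : dist y 0 < r₂ := by
      rw [dist_zero_right]; exact lt_of_lt_of_le hyR (min_le_right _ _)
    calc |u y| ≤ max C₂' 0 * ‖y‖ ^ n' := hr₂ h4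
      _ ≤ M := mul_le_mul_of_nonneg_left (pow_le_pow_left₀ (norm_nonneg y) hy n') hC₂0
  have hxmem : x ∈ ball (0:Ed d) R₀ ∧ |u x| ≤ M := hsmall x (by nlinarith)
  -- pointwise bound
  have hpt : ∀ h ∈ ball (0:Ed d) (((k:ℝ)+1)*ε),
      ‖(Jp p (u x - u (x + h)) + Jp p (u x - u (x - h))) / ‖h‖ ^ ((d : ℝ) + s * p)‖
        ≤ (2 * (C₁':ℝ)^e₁ * (2*M)^e₂) * ‖h‖ ^ (a - (d:ℝ)) := by
    intro h hh
    rcases eq_or_ne h 0 with rfl | hne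
    · have h5 : (Jp p (u x - u (x + (0:Ed d))) + Jp p (u x - u (x - (0:Ed d)))) /
          ‖(0:Ed d)‖ ^ ((d : ℝ) + s * p) = 0 := by
        simp [Jp]
      rw [h5, norm_zero, norm_zero, Real.zero_rpow (by linarith : a - (d:ℝ) ≠ 0), mul_zero]
    · have hn0 : (0:ℝ) < ‖h‖ := norm_pos_iff.2 hne
      have hhR : ‖h‖ < ((k:ℝ)+1)*ε := mem_ball_zero_iff.1 hh
      have hyp : ‖x + h‖ ≤ (2*(k:ℝ)+1)*ε := by
        calc ‖x + h‖ ≤ ‖x‖ + ‖h‖ := norm_add_le _ _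
          _ ≤ (2*(k:ℝ)+1)*ε := by push_cast at hx ⊢; nlinarith
      have hym : ‖x - h‖ ≤ (2*(k:ℝ)+1)*ε := by
        calc ‖x - h‖ ≤ ‖x‖ + ‖h‖ := norm_sub_le _ _
          _ ≤ (2*(k:ℝ)+1)*ε := by push_cast at hx ⊢; nlinarith
      obtain ⟨hp1, hu1⟩ := hsmall _ hyp
      obtain ⟨hp2, hu2⟩ := hsmall _ hym
      have key : ∀ y : Ed d, y ∈ ball (0:Ed d) R₀ → |u y| ≤ M → ‖x - y‖ = ‖h‖ →
          |Jp p (u x - u y)| ≤ (C₁':ℝ)^e₁ * ‖h‖^(s*p+a) * (2*M)^e₂ := by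
        intro y hy1 hy2 hy3
        have hA1 : |u x - u y| ≤ (C₁':ℝ) * ‖h‖ ^ β := by
          rw [← hy3]; exact hHold x hxmem.1 y hy1
        have hA2 : |u x - u y| ≤ 2*M := by
          calc |u x - u y| ≤ |u x - 0| + |0 - u y| := abs_sub_le _ _ _
            _ = |u x| + |u y| := by rw [sub_zero, zero_sub, abs_neg]
            _ ≤ 2*M := by linarith [hxmem.2]
        calc |Jp p (u x - u y)| = |u x - u y| ^ (p - 1) := abs_Jp hp _
          _ = |u x - u y| ^ e₁ * |u x - u y| ^ e₂ := by
              rw [← Real.rpow_add_of_nonneg (abs_nonneg _) he₁0.le he₂0.le, hee]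
          _ ≤ ((C₁':ℝ) * ‖h‖ ^ β) ^ e₁ * (2*M) ^ e₂ :=
              mul_le_mul (Real.rpow_le_rpow (abs_nonneg _) hA1 he₁0.le)
                (Real.rpow_le_rpow (abs_nonneg _) hA2 he₂0.le)
                (Real.rpow_nonneg (abs_nonneg _) _)
                (Real.rpow_nonneg (by positivity) _)
          _ = (C₁':ℝ)^e₁ * ‖h‖^(s*p+a) * (2*M)^e₂ := by
              rw [Real.mul_rpow hC₁0 (Real.rpow_nonneg (norm_nonneg _) _),
                ← Real.rpow_mul (norm_nonneg _), hβe₁]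
      have k1 := key (x + h) hp1 hu1 (by rw [show x - (x + h) = -h by abel, norm_neg])
      have k2 := key (x - h) hp2 hu2 (by rw [show x - (x - h) = h by abel])
      have hD0 : (0:ℝ) < ‖h‖ ^ ((d : ℝ) + s * p) := Real.rpow_pos_of_pos hn0 _
      have hdiv : ‖h‖^(s*p+a) / ‖h‖^((d:ℝ)+s*p) = ‖h‖ ^ (a - (d:ℝ)) := by
        rw [← Real.rpow_sub hn0]; congr 1; ring
      rw [Real.norm_eq_abs, abs_div, abs_of_pos hD0]
      calc |Jp p (u x - u (x + h)) + Jp p (u x - u (x - h))| / ‖h‖ ^ ((d : ℝ) + s * p)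
          ≤ (2 * ((C₁':ℝ)^e₁ * ‖h‖^(s*p+a) * (2*M)^e₂)) / ‖h‖ ^ ((d : ℝ) + s * p) := by
            gcongr
            calc |Jp p (u x - u (x + h)) + Jp p (u x - u (x - h))|
                ≤ |Jp p (u x - u (x + h))| + |Jp p (u x - u (x - h))| := abs_add_le _ _
              _ ≤ _ := by linarith
        _ = (2 * (C₁':ℝ)^e₁ * (2*M)^e₂) * (‖h‖^(s*p+a) / ‖h‖^((d:ℝ)+s*p)) := by ring
        _ = (2 * (C₁':ℝ)^e₁ * (2*M)^e₂) * ‖h‖ ^ (a - (d:ℝ)) := by rw [hdiv]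
  -- assemble
  have hB0 : (0:ℝ) ≤ 2 * (C₁':ℝ)^e₁ * (2*M)^e₂ := by positivity
  have h6 : (∫⁻ h in ball (0:Ed d) (((k:ℝ)+1)*ε),
        ENNReal.ofReal ‖(Jp p (u x - u (x + h)) + Jp p (u x - u (x - h))) / ‖h‖ ^ ((d : ℝ) + s * p)‖)
      ≤ ENNReal.ofReal (2 * (C₁':ℝ)^e₁ * (2*M)^e₂) *
          (ENNReal.ofReal ((((k:ℝ)+1)*ε) ^ ((a - (d:ℝ)) + d)) * K) := by
    calc _ ≤ ∫⁻ h in ball (0:Ed d) (((k:ℝ)+1)*ε),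
          ENNReal.ofReal ((2 * (C₁':ℝ)^e₁ * (2*M)^e₂) * ‖h‖ ^ (a - (d:ℝ))) :=
        setLIntegral_mono' measurableSet_ball
          (fun h hh => ENNReal.ofReal_le_ofReal (hpt h hh))
      _ = ∫⁻ h in ball (0:Ed d) (((k:ℝ)+1)*ε),
          ENNReal.ofReal (2 * (C₁':ℝ)^e₁ * (2*M)^e₂) * ENNReal.ofReal (‖h‖ ^ (a - (d:ℝ))) := by
        simp_rw [ENNReal.ofReal_mul hB0]
      _ = ENNReal.ofReal (2 * (C₁':ℝ)^e₁ * (2*M)^e₂) *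
          ∫⁻ h in ball (0:Ed d) (((k:ℝ)+1)*ε), ENNReal.ofReal (‖h‖ ^ (a - (d:ℝ))) :=
        lintegral_const_mul' _ _ ENNReal.ofReal_ne_top
      _ ≤ _ := mul_le_mul_right (hK _ hR0) _
  have hfin : ENNReal.ofReal (2 * (C₁':ℝ)^e₁ * (2*M)^e₂) *
      (ENNReal.ofReal ((((k:ℝ)+1)*ε) ^ ((a - (d:ℝ)) + d)) * K) ≠ ⊤ :=
    ENNReal.mul_ne_top ENNReal.ofReal_ne_top (ENNReal.mul_ne_top ENNReal.ofReal_ne_top hKfin)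
  have h7 : |∫ h in ball (0 : Ed d) (((k:ℝ) + 1) * ε),
        (Jp p (u x - u (x + h)) + Jp p (u x - u (x - h))) / ‖h‖ ^ ((d : ℝ) + s * p)|
      ≤ (2 * (C₁':ℝ)^e₁ * (2*M)^e₂) * ((((k:ℝ)+1)*ε) ^ ((a - (d:ℝ)) + d) * K.toReal) := by
    rw [← Real.norm_eq_abs]
    refine le_trans (norm_integral_le_lintegral_norm _) ?_
    refine le_trans (ENNReal.toReal_mono hfin h6) ?_
    rw [ENNReal.toReal_mul, ENNReal.toReal_mul, ENNReal.toReal_ofReal hB0,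
      ENNReal.toReal_ofReal (by positivity)]
  -- final algebra
  have e2M : 2 * M = (2*(max C₂' 0)*(2*(k:ℝ)+1)^n') * ε ^ n' := by
    rw [hM, mul_pow]; ring
  have h2Me : (2*M)^e₂ = (2*(max C₂' 0)*(2*(k:ℝ)+1)^n')^e₂ * ε ^ ((n':ℝ)*e₂) := by
    rw [e2M, Real.mul_rpow (by positivity) (by positivity),
      ← Real.rpow_natCast ε n', ← Real.rpow_mul hε0.le]
  have hsac : (a - (d:ℝ)) + d = a := by ring
  have hRa : (((k:ℝ)+1)*ε) ^ a = ((k:ℝ)+1)^a * ε ^ a :=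
    Real.mul_rpow (by positivity) hε0.le
  have hεn : ε ^ ((n':ℝ)*e₂) * ε ^ a ≤ ε ^ n := by
    rw [← Real.rpow_add hε0, ← Real.rpow_natCast ε n]
    apply Real.rpow_le_rpow_of_exponent_ge hε0 hεle1.le
    have h9 := Nat.le_ceil ((n:ℝ)/e₂)
    rw [div_le_iff₀ he₂0] at h9
    have h10 : (n:ℝ) ≤ (n':ℝ)*e₂ := h9
    linarith
  calc |(1 / 2) * ∫ h in ball (0 : Ed d) ((k + 1) * ε),
          (Jp p (u x - u (x + h)) + Jp p (u x - u (x - h))) / ‖h‖ ^ ((d : ℝ) + s * p)|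
      = (1/2) * |∫ h in ball (0 : Ed d) (((k:ℝ) + 1) * ε),
          (Jp p (u x - u (x + h)) + Jp p (u x - u (x - h))) / ‖h‖ ^ ((d : ℝ) + s * p)| := by
        rw [abs_mul, abs_of_pos (by norm_num : (0:ℝ) < 1/2)]
    _ ≤ (1/2) * ((2 * (C₁':ℝ)^e₁ * (2*M)^e₂) * ((((k:ℝ)+1)*ε) ^ ((a - (d:ℝ)) + d) * K.toReal)) :=
        mul_le_mul_of_nonneg_left h7 (by norm_num)
    _ = ((C₁':ℝ)^e₁ * (2*(max C₂' 0)*(2*(k:ℝ)+1)^n')^e₂ * ((k:ℝ)+1)^a * K.toReal) *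
          (ε ^ ((n':ℝ)*e₂) * ε ^ a) := by
        rw [hsac, h2Me, hRa]; ring
    _ ≤ ((C₁':ℝ)^e₁ * (2*(max C₂' 0)*(2*(k:ℝ)+1)^n')^e₂ * ((k:ℝ)+1)^a * K.toReal) * ε ^ n :=
        mul_le_mul_of_nonneg_left hεn (by positivity)
    _ ≤ max ((C₁':ℝ)^e₁ * (2*(max C₂' 0)*(2*(k:ℝ)+1)^n')^e₂ * ((k:ℝ)+1)^a * K.toReal) 1 * ε ^ n :=
        mul_le_mul_of_nonneg_right (le_max_left _ _) (by positivity)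
end
end

section
/- Let d ≥ 1, s ∈ (0,1), p ∈ (1,∞), R₀ ∈ (0,1), k ∈ ℕ, n ∈ ℕ, and let u : ℝ^d → ℝ satisfy |u(y)| ≤ A|y|^n for all y ∈ B_{R₀}(0) and some A > 0. For ε > 0 and x ∈ ℝ^d define W_{2,2}(x,ε) := ∫_{B_{(k+1)ε}(x)^c ∩ B_{(k+1)ε}(0)} J_p(u(x)−u(y)) |x−y|^{−d−sp} dy − ∫_{B_{(k+1)ε}(0)^c ∩ B_{(k+1)ε}(x)} J_p(u(x)−u(y)) |x−y|^{−d−sp} dy. Then there exist C > 0 and ε₁ > 0 such that for all ε ∈ (0,ε₁) and all x ∈ B_{kε}(0), |W_{2,2}(x,ε)| ≤ C ε^{(p−1)n − sp}. -/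
open MeasureTheory Filter Asymptotics Metric Set NNReal ENNReal

noncomputable section

/-!
With `r = (k + 1) ε` and `|x| < k ε`, both domains of integration are pieces of balls of
radius `r`, and every `y` in them satisfies `ε < |x - y|` and `|y| < 2r`: this is the triangle
inequality applied to `y ∉ B_r(a)`, `y ∈ B_r(b)` with `{a, b} = {x, 0}`. Hence
`|u(x) - u(y)| ≤ 2A(2r)^n`, the integrand is bounded by `(2A(2r)^n)^{p-1} ε^{-d-sp}`, and
multiplying by the volume `|B_1| r^d` of the domain gives `C ε^{(p-1)n - sp}`.
-/

lemma abs_Jp_le {p t M : ℝ} (hp : 1 ≤ p) (h : |t| ≤ M) : |Jp p t| ≤ M ^ (p - 1) := by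
  rcases eq_or_ne t 0 with rfl | ht
  · simpa [Jp] using Real.rpow_nonneg ((abs_nonneg 0).trans h) _
  · have habs : |Jp p t| = |t| ^ (p - 1) := by
      rw [Jp, abs_mul, abs_of_nonneg (Real.rpow_nonneg (abs_nonneg t) _),
        ← Real.rpow_add_one (abs_pos.2 ht).ne']
      ring_nf
    rw [habs]
    exact Real.rpow_le_rpow (abs_nonneg t) h (by linarith)

lemma abs_Jp_div_rpow_le {p q a ρ M δ : ℝ} (hp : 1 ≤ p) (hq : 0 ≤ q) (hδ : 0 < δ)
    (ha : |a| ≤ M) (hρ : δ ≤ ρ) : |Jp p a / ρ ^ q| ≤ M ^ (p - 1) / δ ^ q := by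
  rw [abs_div, abs_of_nonneg (Real.rpow_nonneg (hδ.le.trans hρ) _)]
  exact div_le_div₀ (Real.rpow_nonneg ((abs_nonneg a).trans ha) _) (abs_Jp_le hp ha)
    (Real.rpow_pos_of_pos hδ _) (Real.rpow_le_rpow hδ.le hρ hq)

lemma abs_setIntegral_Jp_div_le {E : Type*} [NormedAddCommGroup E] [MeasurableSpace E]
    {μ : Measure E} {p q M δ : ℝ} (hp : 1 ≤ p) (hq : 0 ≤ q) (hδ : 0 < δ)
    {u : E → ℝ} {x : E} {S : Set E} (hS : μ S < ∞)
    (hu : ∀ y ∈ S, |u x - u y| ≤ M) (hdist : ∀ y ∈ S, δ ≤ ‖x - y‖) :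
    |∫ y in S, Jp p (u x - u y) / ‖x - y‖ ^ q ∂μ| ≤ M ^ (p - 1) / δ ^ q * μ.real S := by
  rw [← Real.norm_eq_abs]
  exact norm_setIntegral_le_of_norm_le_const hS fun y hy =>
    abs_Jp_div_rpow_le hp hq hδ (hu y hy) (hdist y hy)

lemma abs_sub_le_of_norm_le {E : Type*} [SeminormedAddCommGroup E] {u : E → ℝ} {A R₀ ρ : ℝ}
    {n : ℕ} (hA : 0 ≤ A) (hbound : ∀ y ∈ ball (0 : E) R₀, |u y| ≤ A * ‖y‖ ^ n)
    (hρ : ρ < R₀) {x y : E} (hx : ‖x‖ ≤ ρ) (hy : ‖y‖ ≤ ρ) : |u x - u y| ≤ 2 * A * ρ ^ n := by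
  have bound : ∀ z : E, ‖z‖ ≤ ρ → |u z| ≤ A * ρ ^ n := fun z hz =>
    (hbound z (mem_ball_zero_iff.2 (hz.trans_lt hρ))).trans
      (mul_le_mul_of_nonneg_left (pow_le_pow_left₀ (norm_nonneg z) hz n) hA)
  linarith [abs_sub (u x) (u y), bound x hx, bound y hy]

lemma dist_bounds_of_mem_compl_ball_inter_ball {α : Type*} [PseudoMetricSpace α] {a b y : α}
    {t ε : ℝ} (hab : dist a b < t) (hy : y ∈ (ball a (t + ε))ᶜ ∩ ball b (t + ε)) :
    ∀ z ∈ ({a, b} : Set α), ε < dist y z ∧ dist y z < 2 * t + ε := by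
  obtain ⟨hya, hyb⟩ := hy
  rw [mem_compl_iff, mem_ball, not_lt] at hya
  rw [mem_ball] at hyb
  have hyab := dist_triangle y b a
  rw [dist_comm b a] at hyab
  have hab₀ := dist_nonneg (x := a) (y := b)
  rintro z (rfl | rfl) <;> constructor <;> linarith

lemma volume_real_ball (d : ℕ) (c : Ed d) {r : ℝ} (hr : 0 < r) :
    volume.real (ball c r) = r ^ d * volume.real (ball (0 : Ed d) 1) := by
  simp only [measureReal_def, Measure.addHaar_ball_of_pos _ c hr, ENNReal.toReal_mul,
    ENNReal.toReal_ofReal (pow_nonneg hr.le _), finrank_euclideanSpace, Fintype.card_fin]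

lemma mul_pow_rpow_div_rpow_mul_pow {K c c' L ε p s : ℝ} {n d : ℕ} (hK : 0 ≤ K) (hc : 0 ≤ c)
    (hε : 0 < ε) :
    (K * (c * ε) ^ n) ^ (p - 1) / ε ^ ((d : ℝ) + s * p) * ((c' * ε) ^ d * L)
      = (K * c ^ n) ^ (p - 1) * (c' ^ d * L) * ε ^ ((p - 1) * n - s * p) := by
  have hpow : (K * (c * ε) ^ n) ^ (p - 1) = (K * c ^ n) ^ (p - 1) * ε ^ ((p - 1) * n) := by
    rw [mul_pow, ← mul_assoc, Real.mul_rpow (by positivity) (by positivity),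
      ← Real.rpow_natCast ε n, ← Real.rpow_mul hε.le, mul_comm (n : ℝ)]
  rw [hpow, mul_pow, Real.rpow_add hε, Real.rpow_natCast, Real.rpow_sub hε]
  have := pow_pos hε d
  have := Real.rpow_pos_of_pos hε (s * p)
  field_simp

lemma abs_setIntegral_compl_ball_inter_ball_le {d : ℕ} {s p A R₀ : ℝ} {n : ℕ} {u : Ed d → ℝ}
    (hs : 0 ≤ s) (hp : 1 < p) (hA : 0 ≤ A)
    (hbound : ∀ y ∈ ball (0 : Ed d) R₀, |u y| ≤ A * ‖y‖ ^ n) {k : ℕ} {ε : ℝ} (hε : 0 < ε)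
    (hεR : 2 * (k + 1) * ε < R₀) {x a b : Ed d} (hab : dist a b < k * ε)
    (hx : x ∈ ({a, b} : Set (Ed d))) (h0 : (0 : Ed d) ∈ ({a, b} : Set (Ed d))) :
    |∫ y in (ball a ((k + 1) * ε))ᶜ ∩ ball b ((k + 1) * ε),
        Jp p (u x - u y) / ‖x - y‖ ^ ((d : ℝ) + s * p)|
      ≤ (2 * A * (2 * (k + 1)) ^ n) ^ (p - 1) * ((k + 1) ^ d * volume.real (ball (0 : Ed d) 1))
        * ε ^ ((p - 1) * n - s * p) := by
  set S := (ball a ((k + 1) * ε))ᶜ ∩ ball b ((k + 1) * ε)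
  have hdist : ∀ y ∈ S, ∀ z ∈ ({a, b} : Set (Ed d)), ε < dist y z ∧ dist y z < 2 * (k + 1) * ε :=
    fun y hy z hz => by
      rw [show S = (ball a (k * ε + ε))ᶜ ∩ ball b (k * ε + ε) by simp only [S, add_one_mul]] at hy
      have := dist_bounds_of_mem_compl_ball_inter_ball hab hy z hz
      constructor <;> linarith
  have hx₀ : ‖x‖ ≤ 2 * (k + 1) * ε := by
    have : dist x 0 ≤ dist a b := by
      rcases hx with rfl | rfl <;> rcases h0 with rfl | rfl <;> simp [dist_comm]
    rw [← dist_zero_right]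
    nlinarith
  have hu : ∀ y ∈ S, |u x - u y| ≤ 2 * A * (2 * (k + 1) * ε) ^ n := fun y hy =>
    abs_sub_le_of_norm_le hA hbound hεR hx₀ (by simpa using (hdist y hy 0 h0).2.le)
  have hxy : ∀ y ∈ S, ε ≤ ‖x - y‖ := fun y hy => by
    simpa [dist_eq_norm, norm_sub_rev] using (hdist y hy x hx).1.le
  calc _ ≤ (2 * A * (2 * (k + 1) * ε) ^ n) ^ (p - 1) / ε ^ ((d : ℝ) + s * p) * volume.real S :=
        abs_setIntegral_Jp_div_le hp.le (by positivity) hε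
          (measure_inter_lt_top_of_right_ne_top measure_ball_lt_top.ne) hu hxy
    _ ≤ (2 * A * (2 * (k + 1) * ε) ^ n) ^ (p - 1) / ε ^ ((d : ℝ) + s * p)
          * volume.real (ball b ((k + 1) * ε)) :=
        mul_le_mul_of_nonneg_left (measureReal_mono inter_subset_right measure_ball_lt_top.ne)
          (by positivity)
    _ = _ := by
        rw [volume_real_ball d b (by positivity)]
        exact mul_pow_rpow_div_rpow_mul_pow (by positivity) (by positivity) hε

theorem W22_bound_general
    (d : ℕ) (s p : ℝ) (hs : s ∈ Ioo (0 : ℝ) 1) (hp : 1 < p)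
    (R₀ : ℝ) (hR₀ : R₀ ∈ Ioo (0 : ℝ) 1) (k : ℕ) (n : ℕ)
    (u : Ed d → ℝ) (A : ℝ) (hA : 0 < A)
    (hbound : ∀ y ∈ ball (0 : Ed d) R₀, |u y| ≤ A * ‖y‖ ^ n) :
    ∃ C > (0 : ℝ), ∃ ε₁ > (0 : ℝ), ∀ ε ∈ Ioo (0 : ℝ) ε₁,
      ∀ x ∈ ball (0 : Ed d) (k * ε),
        |(∫ y in (ball x ((k + 1) * ε))ᶜ ∩ ball (0 : Ed d) ((k + 1) * ε),
            Jp p (u x - u y) / ‖x - y‖ ^ ((d : ℝ) + s * p))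
          - (∫ y in (ball (0 : Ed d) ((k + 1) * ε))ᶜ ∩ ball x ((k + 1) * ε),
              Jp p (u x - u y) / ‖x - y‖ ^ ((d : ℝ) + s * p))|
          ≤ C * ε ^ ((p - 1) * n - s * p) := by
  set K := (2 * A * (2 * (k + 1)) ^ n) ^ (p - 1) * ((k + 1) ^ d * volume.real (ball (0 : Ed d) 1))
  have hv : 0 < volume.real (ball (0 : Ed d) 1) :=
    ENNReal.toReal_pos (measure_ball_pos volume _ one_pos).ne' measure_ball_lt_top.ne
  refine ⟨2 * K, by positivity, R₀ / (2 * (k + 1)), div_pos hR₀.1 (by positivity), ?_⟩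
  rintro ε ⟨hε, hεR⟩ x hx
  rw [lt_div_iff₀ (by positivity), mul_comm] at hεR
  have hx' : dist x 0 < k * ε := hx
  have region := fun a b => abs_setIntegral_compl_ball_inter_ball_le (x := x) (a := a) (b := b)
    hs.1.le hp hA.le hbound hε hεR
  calc _ ≤ K * ε ^ ((p - 1) * n - s * p) + K * ε ^ ((p - 1) * n - s * p) :=
        (abs_sub _ _).trans (add_le_add (region x 0 hx' (by simp) (by simp))
          (region 0 x (dist_comm x 0 ▸ hx') (by simp) (by simp)))
    _ = 2 * K * ε ^ ((p - 1) * n - s * p) := by ring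

/-- bound on `W_{2,2}`. If `|u(y)| ≤ A |y|^n` on `B_{R₀}(0)`, then
`W_{2,2}(x,ε) = ∫_{B_{(k+1)ε}(x)^c ∩ B_{(k+1)ε}(0)} J_p(u(x)-u(y)) |x-y|^{-d-sp} dy
  - ∫_{B_{(k+1)ε}(0)^c ∩ B_{(k+1)ε}(x)} J_p(u(x)-u(y)) |x-y|^{-d-sp} dy`
satisfies `|W_{2,2}(x,ε)| ≤ C ε^{(p-1)n - sp}` for all small `ε` and `x ∈ B_{kε}(0)`. -/
theorem W22_bound
    (d : ℕ) (hd : 1 ≤ d) (s p : ℝ) (hs : s ∈ Ioo (0 : ℝ) 1) (hp : 1 < p)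
    (R₀ : ℝ) (hR₀ : R₀ ∈ Ioo (0 : ℝ) 1) (k : ℕ) (n : ℕ)
    (u : Ed d → ℝ) (A : ℝ) (hA : 0 < A)
    (hbound : ∀ y ∈ ball (0 : Ed d) R₀, |u y| ≤ A * ‖y‖ ^ n) :
    ∃ C > (0 : ℝ), ∃ ε₁ > (0 : ℝ), ∀ ε ∈ Ioo (0 : ℝ) ε₁,
      ∀ x ∈ ball (0 : Ed d) (k * ε),
        |(∫ y in (ball x ((k + 1) * ε))ᶜ ∩ ball (0 : Ed d) ((k + 1) * ε),
            Jp p (u x - u y) / ‖x - y‖ ^ ((d : ℝ) + s * p))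
          - (∫ y in (ball (0 : Ed d) ((k + 1) * ε))ᶜ ∩ ball x ((k + 1) * ε),
              Jp p (u x - u y) / ‖x - y‖ ^ ((d : ℝ) + s * p))|
          ≤ C * ε ^ ((p - 1) * n - s * p) :=
  W22_bound_general d s p hs hp R₀ hR₀ k n u A hA hbound
end
end

section
/- Let d ≥ 1, s ∈ (0,1), p ∈ (1,∞), and let u ∈ L^{p−1}_{sp}(ℝ^d). Suppose there exists M > 0 such that for every integer k ≥ 1, ∫_{B_{1/k}(0)} |u(x)|^{p−1} |x|^{−d−sp−2k} dx ≤ (Mk)^{2k}. Then the Carleman condition holds: for every i ∈ {1,…,d}, the series Σ_{k=1}^∞ m_{i,k}^{−1/(2k)} diverges to +∞. -/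
/-!
Split the moment `m_{i,k}` at the ball `B_{1/k}(0)`. Inside, `x_i^{2k} |x|^{-4k} ≤ |x|^{-2k}`, so
that part is bounded by the hypothesis by `(Mk)^{2k}`. Outside, `|x| ≥ 1/k` gives
`|x|^{-2k} ≤ k^{2k}` and `|x|^{-d-sp} ≤ (k+1)^{d+sp} (1+|x|)^{-d-sp}`, so that part is at most
`k^{2k} (k+1)^{d+sp}` times the tail norm `A` of `u`. Since `(k+1)^{d+sp} ≤ (2^{d+sp})^{2k}`, both
are `≤ (Ck)^{2k}` for a single `C`, hence `m_{i,k}^{-1/(2k)} ≥ 1/(Ck)` and the series dominates a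
multiple of the harmonic series.
-/

open MeasureTheory Filter Asymptotics Metric Set NNReal ENNReal

noncomputable section

section Pointwise

variable {ι : Type*} [Fintype ι]

lemma apply_pow_two_mul_le_norm_pow (x : EuclideanSpace ℝ ι) (i : ι) (k : ℕ) :
    x i ^ (2 * k) ≤ ‖x‖ ^ (2 * k) := by
  rw [pow_mul, pow_mul, ← sq_abs]
  gcongr
  simpa using PiLp.norm_apply_le x i

lemma apply_pow_div_norm_pow_le_inv (x : EuclideanSpace ℝ ι) (i : ι) (k : ℕ) :
    x i ^ (2 * k) / ‖x‖ ^ (4 * k) ≤ (‖x‖ ^ (2 * k))⁻¹ := by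
  rw [show 4 * k = 2 * k + 2 * k by ring, pow_add, ← div_self_mul_self']
  exact div_le_div_of_nonneg_right (apply_pow_two_mul_le_norm_pow x i k) (by positivity)

lemma apply_pow_div_norm_pow_mul_le {E a : ℝ} (x : EuclideanSpace ℝ ι) (i : ι) {k : ℕ}
    (ha : 0 ≤ a) (hEk : E + 2 * k ≠ 0) :
    x i ^ (2 * k) / ‖x‖ ^ (4 * k) * (a / ‖x‖ ^ E) ≤ a / ‖x‖ ^ (E + 2 * k) := by
  calc x i ^ (2 * k) / ‖x‖ ^ (4 * k) * (a / ‖x‖ ^ E)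
      ≤ (‖x‖ ^ (2 * k))⁻¹ * (a / ‖x‖ ^ E) := by
        gcongr
        exact apply_pow_div_norm_pow_le_inv x i k
    _ = a / ‖x‖ ^ (E + 2 * k) := by
        rw [Real.rpow_add' (norm_nonneg x) hEk,
          show (2 * k : ℝ) = (2 * k : ℕ) by push_cast; rfl, Real.rpow_natCast]
        field_simp

lemma inv_pow_le_pow_of_one_le_mul {r c : ℝ} (hr : 0 < r) (hc : 1 ≤ c * r) (n : ℕ) :
    (r ^ n)⁻¹ ≤ c ^ n := by
  rw [inv_le_iff_one_le_mul₀ (by positivity), ← mul_pow]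
  exact one_le_pow₀ hc

lemma div_rpow_le_mul_div_one_add_rpow {r c E a : ℝ} (hr : 0 < r) (hc : 1 ≤ c * r)
    (hE : 0 ≤ E) (ha : 0 ≤ a) :
    a / r ^ E ≤ (c + 1) ^ E * (a / (1 + r) ^ E) := by
  have hc0 : 0 < c := pos_of_mul_pos_left (one_pos.trans_le hc) hr.le
  have : (1 + r) ^ E ≤ (c + 1) ^ E * r ^ E := by
    rw [← Real.mul_rpow (by positivity) hr.le]
    gcongr
    linarith
  rw [mul_div_assoc', le_div_iff₀ (by positivity), div_mul_eq_mul_div, div_le_iff₀ (by positivity)]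
  nlinarith

lemma apply_pow_div_norm_pow_mul_le_of_one_le_mul_norm {E a : ℝ} (x : EuclideanSpace ℝ ι) (i : ι)
    {k : ℕ} (hx : 1 ≤ k * ‖x‖) (hE : 0 ≤ E) (ha : 0 ≤ a) :
    x i ^ (2 * k) / ‖x‖ ^ (4 * k) * (a / ‖x‖ ^ E)
      ≤ k ^ (2 * k) * (k + 1) ^ E * (a / (1 + ‖x‖) ^ E) := by
  have hx0 : 0 < ‖x‖ := pos_of_mul_pos_right (one_pos.trans_le hx) (Nat.cast_nonneg k)
  rw [mul_assoc]
  gcongr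
  · exact (apply_pow_div_norm_pow_le_inv x i k).trans (inv_pow_le_pow_of_one_le_mul hx0 hx _)
  · exact div_rpow_le_mul_div_one_add_rpow hx0 hx hE ha

end Pointwise

lemma mik_le_ball_add_tail (d : ℕ) (s p : ℝ) (hE : 0 ≤ (d : ℝ) + s * p) (u : Ed d → ℝ)
    (i : Fin d) {k : ℕ} (hk : k ≠ 0) :
    mik d s p u i k ≤
      (∫⁻ x in ball (0 : Ed d) (1 / k),
          ENNReal.ofReal (|u x| ^ (p - 1) / ‖x‖ ^ ((d : ℝ) + s * p + 2 * k))) +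
        ENNReal.ofReal (k ^ (2 * k) * (k + 1) ^ ((d : ℝ) + s * p)) *
          ∫⁻ x, ENNReal.ofReal (|u x| ^ (p - 1) / (1 + ‖x‖) ^ ((d : ℝ) + s * p)) := by
  have hball : MeasurableSet (ball (0 : Ed d) (1 / k)) := measurableSet_ball
  rw [mik, ← lintegral_add_compl _ hball, ← lintegral_const_mul' _ _ ENNReal.ofReal_ne_top]
  refine add_le_add (setLIntegral_mono' hball fun x _ => ?_)
    ((setLIntegral_mono' hball.compl fun x hx => ?_).trans (setLIntegral_le_lintegral _ _))
  · exact ENNReal.ofReal_le_ofReal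
      (apply_pow_div_norm_pow_mul_le x i (by positivity) (by positivity))
  · have hx : 1 ≤ k * ‖x‖ := by
      rw [← div_le_iff₀' (by positivity)]
      simpa using hx
    rw [← ENNReal.ofReal_mul (by positivity)]
    exact ENNReal.ofReal_le_ofReal
      (apply_pow_div_norm_pow_mul_le_of_one_le_mul_norm x i hx hE (by positivity))

lemma add_one_rpow_le_two_rpow_pow {E : ℝ} (hE : 0 ≤ E) (k : ℕ) :
    ((k : ℝ) + 1) ^ E ≤ ((2 : ℝ) ^ E) ^ k := by
  rw [← Real.rpow_mul_natCast (by norm_num), mul_comm, Real.rpow_mul (by norm_num),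
    Real.rpow_natCast]
  gcongr
  exact_mod_cast Nat.lt_two_pow_self

lemma pow_add_pow_mul_rpow_mul_le {M A E : ℝ} (hM : 0 ≤ M) (hA : 0 ≤ A) (hE : 0 ≤ E)
    {k : ℕ} (hk : k ≠ 0) :
    (M * k) ^ (2 * k) + k ^ (2 * k) * (k + 1) ^ E * A
      ≤ ((M + 2 ^ E * (A + 1)) * k) ^ (2 * k) := by
  have h2E : 1 ≤ (2 : ℝ) ^ E := Real.one_le_rpow one_le_two hE
  have hpow : ((k : ℝ) + 1) ^ E ≤ ((2 : ℝ) ^ E) ^ (2 * k) :=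
    (add_one_rpow_le_two_rpow_pow hE k).trans (pow_le_pow_right₀ h2E (by omega))
  have hA' : A ≤ (A + 1) ^ (2 * k) :=
    (lt_add_one A).le.trans (le_self_pow₀ (by linarith) (by omega))
  calc (M * k) ^ (2 * k) + k ^ (2 * k) * (k + 1) ^ E * A
      ≤ (M * k) ^ (2 * k) + k ^ (2 * k) * ((2 : ℝ) ^ E) ^ (2 * k) * (A + 1) ^ (2 * k) := by
        gcongr
    _ = (M * k) ^ (2 * k) + (2 ^ E * (A + 1) * k) ^ (2 * k) := by
        simp only [mul_pow]; ring
    _ ≤ ((M + 2 ^ E * (A + 1)) * k) ^ (2 * k) := by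
        rw [add_mul]
        exact pow_add_pow_le (by positivity) (by positivity) (by omega)

lemma tsum_inv_add_one_eq_top : ∑' k : ℕ, ((k : ℝ≥0∞) + 1)⁻¹ = ⊤ := by
  by_contra h
  refine Real.not_summable_natCast_inv ((_root_.summable_nat_add_iff 1).1
    ((ENNReal.summable_toReal h).congr fun k => ?_))
  simp [ENNReal.toReal_add]

lemma tsum_inv_rpow_eq_top_of_le_mul_pow {m : ℕ → ℝ≥0∞} {C : ℝ≥0∞} (hC : C ≠ ⊤)
    (hm : ∀ k : ℕ, k ≠ 0 → m k ≤ (C * k) ^ (2 * k)) :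
    ∑' k : ℕ, (m (k + 1) ^ ((1 : ℝ) / (2 * ((k : ℝ) + 1))))⁻¹ = ⊤ := by
  have hterm : ∀ k : ℕ, C⁻¹ * ((k : ℝ≥0∞) + 1)⁻¹
      ≤ (m (k + 1) ^ ((1 : ℝ) / (2 * ((k : ℝ) + 1))))⁻¹ := by
    intro k
    rw [← ENNReal.mul_inv (.inr (by simp)) (.inl hC), ENNReal.inv_le_inv]
    have hexp : (1 : ℝ) / (2 * ((k : ℝ) + 1)) = ((2 * (k + 1) : ℕ) : ℝ)⁻¹ := by
      push_cast; ring
    calc m (k + 1) ^ ((1 : ℝ) / (2 * ((k : ℝ) + 1)))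
        ≤ ((C * (k + 1 : ℕ)) ^ (2 * (k + 1))) ^ ((1 : ℝ) / (2 * ((k : ℝ) + 1))) := by
          gcongr
          exact hm (k + 1) k.succ_ne_zero
      _ = C * (k + 1) := by
          rw [hexp, ENNReal.pow_rpow_inv_natCast (by omega)]
          push_cast; rfl
  refine eq_top_mono (ENNReal.tsum_le_tsum hterm) ?_
  rw [ENNReal.tsum_mul_left, tsum_inv_add_one_eq_top, ENNReal.mul_top (ENNReal.inv_ne_zero.2 hC)]

theorem sufficient_condition_for_carleman_general
    (d : ℕ) (s p : ℝ) (hs : s ∈ Ioo (0 : ℝ) 1) (hp : 1 < p)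
    (u : Ed d → ℝ) (hu : memTail d s p u)
    (M : ℝ) (hM : 0 < M)
    (hbound : ∀ k : ℕ, 1 ≤ k →
      (∫⁻ x in ball (0 : Ed d) (1 / k),
          ENNReal.ofReal (|u x| ^ (p - 1) / ‖x‖ ^ ((d : ℝ) + s * p + 2 * k)))
        ≤ ENNReal.ofReal ((M * k) ^ (2 * k))) :
    carleman d s p u := by
  have hE : 0 ≤ (d : ℝ) + s * p := add_nonneg d.cast_nonneg (mul_nonneg hs.1.le (by linarith))
  set A := ∫⁻ x, ENNReal.ofReal (|u x| ^ (p - 1) / (1 + ‖x‖) ^ ((d : ℝ) + s * p))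
  have hA_ne_top : A ≠ ⊤ := hu.2.lintegral_lt_top.ne
  intro i
  refine tsum_inv_rpow_eq_top_of_le_mul_pow
    (C := ENNReal.ofReal (M + 2 ^ ((d : ℝ) + s * p) * (A.toReal + 1))) ENNReal.ofReal_ne_top
    fun k hk => ?_
  calc mik d s p u i k
      ≤ ENNReal.ofReal ((M * k) ^ (2 * k)) +
          ENNReal.ofReal (k ^ (2 * k) * (k + 1) ^ ((d : ℝ) + s * p)) * A :=
        (mik_le_ball_add_tail d s p hE u i hk).trans
          (add_le_add (hbound k (Nat.one_le_iff_ne_zero.2 hk)) le_rfl)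
    _ = ENNReal.ofReal ((M * k) ^ (2 * k) +
          k ^ (2 * k) * (k + 1) ^ ((d : ℝ) + s * p) * A.toReal) := by
        rw [ENNReal.ofReal_add (by positivity) (by positivity),
          ENNReal.ofReal_mul (p := k ^ (2 * k) * (k + 1) ^ ((d : ℝ) + s * p)) (by positivity),
          ENNReal.ofReal_toReal hA_ne_top]
    _ ≤ ENNReal.ofReal (((M + 2 ^ ((d : ℝ) + s * p) * (A.toReal + 1)) * k) ^ (2 * k)) :=
        ENNReal.ofReal_le_ofReal (pow_add_pow_mul_rpow_mul_le hM.le ENNReal.toReal_nonneg hE hk)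
    _ = (ENNReal.ofReal (M + 2 ^ ((d : ℝ) + s * p) * (A.toReal + 1)) * k) ^ (2 * k) := by
        rw [← ENNReal.ofReal_natCast, ← ENNReal.ofReal_mul (by positivity),
          ← ENNReal.ofReal_pow (by positivity)]

/-- a sufficient condition for the Carleman condition. If
`∫_{B_{1/k}(0)} |u(x)|^{p-1} |x|^{-d-sp-2k} dx ≤ (Mk)^{2k}` for all `k ≥ 1` and some
`M > 0`, then the Carleman condition holds. -/
theorem sufficient_condition_for_carleman
    (d : ℕ) (hd : 1 ≤ d) (s p : ℝ) (hs : s ∈ Ioo (0 : ℝ) 1) (hp : 1 < p)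
    (u : Ed d → ℝ) (hu : memTail d s p u)
    (M : ℝ) (hM : 0 < M)
    (hbound : ∀ k : ℕ, 1 ≤ k →
      (∫⁻ x in ball (0 : Ed d) (1 / k),
          ENNReal.ofReal (|u x| ^ (p - 1) / ‖x‖ ^ ((d : ℝ) + s * p + 2 * k)))
        ≤ ENNReal.ofReal ((M * k) ^ (2 * k))) :
    carleman d s p u :=
  sufficient_condition_for_carleman_general d s p hs hp u hu M hM hbound
end
end

section
/- Let d ≥ 1, s ∈ (0,1), p ∈ (1,∞), and let u ∈ L^{p−1}_{sp}(ℝ^d). If u = 0 almost everywhere on B_r(0) for some r > 0, then the Carleman condition holds: for every i ∈ {1,…,d}, the series Σ_{k=1}^∞ m_{i,k}^{−1/(2k)} diverges to +∞. In particular, the strong-type unique continuation principle with hypothesis Σ_k m_{i,k}^{−1/(2k)} = +∞ implies the weak unique continuation principle. -/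
open MeasureTheory Filter Asymptotics Metric Set NNReal ENNReal

noncomputable section

/-- the Carleman condition holds if `u` vanishes near the origin; hence
the strong-type UCP implies the weak UCP. If `u ∈ L^{p-1}_{sp}(ℝ^d)` satisfies `u = 0`
a.e. on `B_r(0)` for some `r > 0`, then for every `i` the series
`∑_{k≥1} m_{i,k}^{-1/(2k)}` diverges to `+∞`. -/
theorem vanishing_near_origin_implies_carleman
    (d : ℕ) (hd : 1 ≤ d) (s p : ℝ) (hs : s ∈ Ioo (0 : ℝ) 1) (hp : 1 < p)
    (u : Ed d → ℝ) (hu : memTail d s p u)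
    (r : ℝ) (hr : 0 < r)
    (hzero : ∀ᵐ x ∂(volume.restrict (ball (0 : Ed d) r)), u x = 0) :
    carleman d s p u := by
  intro i
  obtain ⟨hmeas, hint⟩ := hu
  set e : ℝ := (d : ℝ) + s * p with he
  have he0 : 0 < e := by
    have : (0:ℝ) < s * p := mul_pos hs.1 (lt_trans one_pos hp)
    have : (0:ℝ) ≤ (d:ℝ) := Nat.cast_nonneg d
    positivity
  -- the tail integral is finite
  set B : ℝ≥0∞ := ∫⁻ x : Ed d, ENNReal.ofReal (|u x| ^ (p - 1) / (1 + ‖x‖) ^ e) with hBdef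
  have hB : B < ⊤ := hint.lintegral_lt_top
  -- constants
  set C : ℝ≥0∞ := ENNReal.ofReal ((1 + 1/r) ^ e) * B with hCdef
  have hC : C ≠ ⊤ := ENNReal.mul_ne_top ENNReal.ofReal_ne_top hB.ne
  set M : ℝ≥0∞ := max C 1 with hMdef
  have hM1 : 1 ≤ M := le_max_right _ _
  have hMtop : M ≠ ⊤ := by
    simp only [hMdef, max_eq_top, ne_eq]
    push_neg
    exact ⟨hC, ENNReal.one_ne_top⟩
  -- the a.e. vanishing on the ball
  have hz : ∀ᵐ x : Ed d ∂volume, x ∈ ball (0 : Ed d) r → u x = 0 :=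
    (ae_restrict_iff' measurableSet_ball).mp hzero
  -- key bound on the moments
  have key : ∀ k : ℕ, mik d s p u i (k + 1) ≤
      ENNReal.ofReal ((r ^ (2 * (k + 1)))⁻¹) * M := by
    intro k
    have step : mik d s p u i (k + 1) ≤
        ENNReal.ofReal ((r ^ (2 * (k + 1)))⁻¹ * (1 + 1/r) ^ e) * B := by
      rw [hBdef, ← lintegral_const_mul' _ _ ENNReal.ofReal_ne_top]
      refine lintegral_mono_ae (hz.mono fun x hx => ?_)
      rcases lt_or_ge ‖x‖ r with hxr | hxr
      · have hux : u x = 0 := hx (mem_ball_zero_iff.mpr hxr)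
        have : |u x| ^ (p - 1) = 0 := by
          rw [hux, abs_zero, Real.zero_rpow (by linarith)]
        simp [this]
      · have hxpos : 0 < ‖x‖ := lt_of_lt_of_le hr hxr
        rw [← ENNReal.ofReal_mul (by positivity)]
        refine ENNReal.ofReal_le_ofReal ?_
        have h1 : x i ^ (2 * (k + 1)) / ‖x‖ ^ (4 * (k + 1)) ≤ (r ^ (2 * (k + 1)))⁻¹ := by
          have hle : x i ^ (2 * (k + 1)) ≤ ‖x‖ ^ (2 * (k + 1)) := by
            have habs : |x i| ≤ ‖x‖ := by
              calc |x i| = Real.sqrt ((x i) ^ 2) := (Real.sqrt_sq_eq_abs _).symm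
                _ ≤ Real.sqrt (∑ j, ‖x j‖ ^ 2) := by
                    refine Real.sqrt_le_sqrt ?_
                    have := Finset.single_le_sum
                      (f := fun j : Fin d => ‖x j‖ ^ 2)
                      (fun j _ => by positivity) (Finset.mem_univ i)
                    simpa [Real.norm_eq_abs, sq_abs] using this
                _ = ‖x‖ := (EuclideanSpace.norm_eq x).symm
            calc x i ^ (2 * (k + 1)) = |x i| ^ (2 * (k + 1)) :=
                  ((even_two_mul _).pow_abs _).symm
              _ ≤ ‖x‖ ^ (2 * (k + 1)) := pow_le_pow_left₀ (abs_nonneg _) habs _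
          have h4 : (4 : ℕ) * (k + 1) = 2 * (k + 1) + 2 * (k + 1) := by ring
          calc x i ^ (2 * (k + 1)) / ‖x‖ ^ (4 * (k + 1))
              ≤ ‖x‖ ^ (2 * (k + 1)) / ‖x‖ ^ (4 * (k + 1)) := by gcongr
            _ = (‖x‖ ^ (2 * (k + 1)))⁻¹ := by
                rw [h4, pow_add, ← div_div, div_self (by positivity : (0:ℝ) < _).ne', one_div]
            _ ≤ (r ^ (2 * (k + 1)))⁻¹ :=
                inv_anti₀ (by positivity) (pow_le_pow_left₀ hr.le hxr _)
        have h2 : |u x| ^ (p - 1) / ‖x‖ ^ e ≤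
            (1 + 1/r) ^ e * (|u x| ^ (p - 1) / (1 + ‖x‖) ^ e) := by
          have hx1 : (1 : ℝ) + ‖x‖ ≤ (1 + 1/r) * ‖x‖ := by
            have : (1:ℝ) ≤ ‖x‖ / r := (one_le_div hr).mpr hxr
            calc (1:ℝ) + ‖x‖ ≤ ‖x‖ / r + ‖x‖ := by linarith
              _ = (1 + 1/r) * ‖x‖ := by field_simp; ring
          have hpow : ((1 : ℝ) + ‖x‖) ^ e ≤ (1 + 1/r) ^ e * ‖x‖ ^ e := by
            calc ((1 : ℝ) + ‖x‖) ^ e ≤ ((1 + 1/r) * ‖x‖) ^ e :=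
                  Real.rpow_le_rpow (by positivity) hx1 he0.le
              _ = (1 + 1/r) ^ e * ‖x‖ ^ e := Real.mul_rpow (by positivity) (norm_nonneg x)
          have hinv : (‖x‖ ^ e)⁻¹ ≤ (1 + 1/r) ^ e / (1 + ‖x‖) ^ e := by
            rw [le_div_iff₀ (by positivity), inv_mul_le_iff₀ (by positivity)]
            rw [mul_comm] at hpow
            exact hpow
          calc |u x| ^ (p - 1) / ‖x‖ ^ e = |u x| ^ (p - 1) * (‖x‖ ^ e)⁻¹ :=
                div_eq_mul_inv _ _
            _ ≤ |u x| ^ (p - 1) * ((1 + 1/r) ^ e / (1 + ‖x‖) ^ e) :=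
                mul_le_mul_of_nonneg_left hinv (by positivity)
            _ = (1 + 1/r) ^ e * (|u x| ^ (p - 1) / (1 + ‖x‖) ^ e) := by ring
        calc x i ^ (2 * (k + 1)) / ‖x‖ ^ (4 * (k + 1)) * (|u x| ^ (p - 1) / ‖x‖ ^ e)
            ≤ (r ^ (2 * (k + 1)))⁻¹ * ((1 + 1/r) ^ e * (|u x| ^ (p - 1) / (1 + ‖x‖) ^ e)) := by
              apply mul_le_mul h1 h2 (by positivity) (by positivity)
          _ = (r ^ (2 * (k + 1)))⁻¹ * (1 + 1/r) ^ e * (|u x| ^ (p - 1) / (1 + ‖x‖) ^ e) := by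
              ring
    calc mik d s p u i (k + 1)
        ≤ ENNReal.ofReal ((r ^ (2 * (k + 1)))⁻¹ * (1 + 1/r) ^ e) * B := step
      _ = ENNReal.ofReal ((r ^ (2 * (k + 1)))⁻¹) * C := by
          rw [ENNReal.ofReal_mul (by positivity), hCdef, mul_assoc]
      _ ≤ ENNReal.ofReal ((r ^ (2 * (k + 1)))⁻¹) * M :=
          mul_le_mul_right (le_max_left _ _) _
  -- each term of the series is bounded below by a fixed positive constant
  set c : ℝ≥0∞ := ENNReal.ofReal r * M⁻¹ with hcdef
  have hc0 : c ≠ 0 := by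
    apply mul_ne_zero
    · simpa using hr
    · exact ENNReal.inv_ne_zero.mpr hMtop
  have lower : ∀ k : ℕ,
      c ≤ (mik d s p u i (k + 1) ^ ((1 : ℝ) / (2 * ((k : ℝ) + 1))))⁻¹ := by
    intro k
    have hα : (0 : ℝ) < (1 : ℝ) / (2 * ((k : ℝ) + 1)) := by positivity
    set α : ℝ := (1 : ℝ) / (2 * ((k : ℝ) + 1)) with hαdef
    have hupper : mik d s p u i (k + 1) ^ α ≤ (ENNReal.ofReal r)⁻¹ * M := by
      calc mik d s p u i (k + 1) ^ α
          ≤ (ENNReal.ofReal ((r ^ (2 * (k + 1)))⁻¹) * M) ^ α :=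
            ENNReal.rpow_le_rpow (key k) hα.le
        _ = ENNReal.ofReal ((r ^ (2 * (k + 1)))⁻¹) ^ α * M ^ α :=
            ENNReal.mul_rpow_of_nonneg _ _ hα.le
        _ ≤ (ENNReal.ofReal r)⁻¹ * M := by
            have h1 : ENNReal.ofReal ((r ^ (2 * (k + 1)))⁻¹) ^ α = (ENNReal.ofReal r)⁻¹ := by
              have : ((r ^ (2 * (k + 1)))⁻¹ : ℝ) = r ^ (-(2 * ((k : ℝ) + 1))) := by
                rw [← Real.rpow_natCast r (2 * (k + 1)), ← Real.rpow_neg hr.le]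
                push_cast
                ring_nf
              rw [this, ← ENNReal.ofReal_rpow_of_pos hr, ← ENNReal.rpow_mul]
              rw [show (-(2 * ((k : ℝ) + 1))) * α = -1 by
                rw [hαdef]; field_simp]
              exact ENNReal.rpow_neg_one _
            have h2 : M ^ α ≤ M := by
              nth_rewrite 2 [← ENNReal.rpow_one M]
              refine ENNReal.rpow_le_rpow_of_exponent_le hM1 ?_
              rw [hαdef, div_le_one (by positivity)]
              have : (0:ℝ) ≤ (k:ℝ) := Nat.cast_nonneg k
              linarith
            rw [h1]
            exact mul_le_mul_right h2 _
    calc c = ((ENNReal.ofReal r)⁻¹ * M)⁻¹ := by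
          rw [hcdef, ENNReal.mul_inv (Or.inl (ENNReal.inv_ne_zero.mpr ENNReal.ofReal_ne_top))
            (Or.inl (ENNReal.inv_ne_top.mpr (by simpa using hr))), inv_inv]
      _ ≤ (mik d s p u i (k + 1) ^ α)⁻¹ := ENNReal.inv_le_inv' hupper
  refine top_le_iff.mp ?_
  calc (⊤ : ℝ≥0∞) = ∑' _ : ℕ, c := (ENNReal.tsum_const_eq_top_of_ne_zero hc0).symm
    _ ≤ ∑' k : ℕ, (mik d s p u i (k + 1) ^ ((1 : ℝ) / (2 * ((k : ℝ) + 1))))⁻¹ :=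
        ENNReal.tsum_le_tsum lower
end
end
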